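/- arXiv:1604.02950 — 5 statements merged into one kernel-verified Lean document; each statement's English description precedes it below -/
import Mathlib

section
/- Let M be a right H-Hopf module over a Hopf algebra H with antipode S. Then the map P_R : M → M defined by P_R(m) = m_(0) · S(m_(1)) is a projection from M onto the subspace of right coinvariants M^R = {m ∈ M | ρ_R(m) = m ⊗ 1_H}, i.e., P_R(M) ⊆ M^R, P_R restricts to the identity on M^R, and P_R² = P_R. -/
/-!
The Hopf-algebraic input is the identity `(1 ⊗ h₁) · Δ(S h₂) = S h ⊗ 1` in `H ⊗ H`. In the
convolution algebra `Hom(H, H ⊗ H)`, `(h ↦ S h ⊗ 1) * Δ = (h ↦ 1 ⊗ h)` by coassociativity and the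
antipode axiom, and `Δ ∘ S` is a right convolution inverse of `Δ`; multiplying on the right by it
gives the identity. Together with coassociativity of `ρ` and the Hopf module compatibility it yields
`ρ(m₍₀₎ · S m₍₁₎) = m₍₀₎ · S m₍₁₎ ⊗ 1`. On coinvariants the projection is the identity since
`S 1 = 1`, and idempotence follows from the two.
-/

open TensorProduct LinearMap

/-- A right Hopf module over a Hopf algebra `H`: `act` is a right `H`-module structure,
`ρ` is a right `H`-comodule structure, and the compatibility `ρ (m · h) = ρ(m) Δ(h)` holds. -/
def IsRightHopfModule (K : Type*) [Field K] (H : Type*) [Ring H] [HopfAlgebra K H]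
    {M : Type*} [AddCommGroup M] [Module K M]
    (act : M ⊗[K] H →ₗ[K] M) (ρ : M →ₗ[K] M ⊗[K] H) : Prop :=
  -- right module axioms
  (∀ (m : M) (h h' : H), act (act (m ⊗ₜ[K] h) ⊗ₜ[K] h') = act (m ⊗ₜ[K] (h * h'))) ∧
  (∀ m : M, act (m ⊗ₜ[K] (1 : H)) = m) ∧
  -- right comodule axioms: coassociativity and counitality
  (rTensor H ρ ∘ₗ ρ =
    (TensorProduct.assoc K M H H).symm.toLinearMap ∘ₗ lTensor M (Coalgebra.comul (R := K)) ∘ₗ ρ) ∧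
  (∀ m : M, (TensorProduct.rid K M) ((lTensor M (Coalgebra.counit (R := K))) (ρ m)) = m) ∧
  -- Hopf module compatibility: ρ(m·h) = m₍₀₎·h₁ ⊗ m₍₁₎h₂
  (ρ ∘ₗ act =
    TensorProduct.map act (LinearMap.mul' K H) ∘ₗ
      (tensorTensorTensorComm K M H H H).toLinearMap ∘ₗ
        TensorProduct.map ρ (Coalgebra.comul (R := K)))

open Coalgebra WithConv

namespace HopfAlgebra

variable {R H : Type*} [CommSemiring R] [Semiring H] [HopfAlgebra R H]

lemma mul'_comp_map_includeLeft_comp_antipode (f : H →ₗ[R] H ⊗[R] H) :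
    mul' R (H ⊗[R] H) ∘ₗ
        map ((Algebra.TensorProduct.includeLeft : H →ₐ[R] H ⊗[R] H).toLinearMap ∘ₗ antipode R) f =
      rTensor H (mul' R H ∘ₗ rTensor H (antipode R)) ∘ₗ
        (TensorProduct.assoc R H H H).symm.toLinearMap ∘ₗ lTensor H f := by
  ext a b
  simp only [AlgebraTensorModule.curry_apply, curry_apply, restrictScalars_self, coe_comp,
    Function.comp_apply, map_tmul, lTensor_tmul, LinearEquiv.coe_coe]
  induction f b using TensorProduct.induction_on with
  | zero => simp
  | tmul x y => simp
  | add x y hx hy => simp only [tmul_add, map_add, hx, hy]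

lemma includeLeft_comp_antipode_convMul_comul :
    toConv ((Algebra.TensorProduct.includeLeft : H →ₐ[R] H ⊗[R] H).toLinearMap ∘ₗ antipode R) *
      toConv (comul : H →ₗ[R] H ⊗[R] H) =
    toConv (Algebra.TensorProduct.includeRight : H →ₐ[R] H ⊗[R] H).toLinearMap := by
  ext h
  calc _ = rTensor H (mul' R H ∘ₗ rTensor H (antipode R))
          ((TensorProduct.assoc R H H H).symm (lTensor H comul (comul h))) :=
        congr($(mul'_comp_map_includeLeft_comp_antipode comul) (comul h))
    _ = rTensor H (Algebra.linearMap R H ∘ₗ counit) (comul h) := by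
        rw [coassoc_symm_apply, ← rTensor_comp_apply, comp_assoc, mul_antipode_rTensor_comul]
    _ = _ := by rw [rTensor_comp_apply, rTensor_counit_comul]; simp

lemma includeRight_convMul_comul_comp_antipode :
    toConv (Algebra.TensorProduct.includeRight : H →ₐ[R] H ⊗[R] H).toLinearMap *
      toConv ((comul : H →ₗ[R] H ⊗[R] H) ∘ₗ antipode R) =
    toConv ((Algebra.TensorProduct.includeLeft : H →ₐ[R] H ⊗[R] H).toLinearMap ∘ₗ antipode R) := by
  rw [← includeLeft_comp_antipode_convMul_comul, mul_assoc, comul_right_inv, mul_one]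

end HopfAlgebra

section HopfModule

variable {R H M : Type*} [CommSemiring R] [Semiring H] [HopfAlgebra R H]
  [AddCommMonoid M] [Module R M]

lemma map_mul'_comp_tensorTensorTensorComm_comp_lTensor (act : M ⊗[R] H →ₗ[R] M)
    (f : H →ₗ[R] H ⊗[R] H) :
    map act (mul' R H) ∘ₗ (tensorTensorTensorComm R M H H H).toLinearMap ∘ₗ
        lTensor (M ⊗[R] H) f ∘ₗ (TensorProduct.assoc R M H H).symm.toLinearMap =
      rTensor H act ∘ₗ (TensorProduct.assoc R M H H).symm.toLinearMap ∘ₗ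
        lTensor M (mul' R (H ⊗[R] H) ∘ₗ
          map (Algebra.TensorProduct.includeRight : H →ₐ[R] H ⊗[R] H).toLinearMap f) := by
  ext n a h
  simp only [AlgebraTensorModule.curry_apply, curry_apply, restrictScalars_self, coe_comp,
    Function.comp_apply, map_tmul, lTensor_tmul, LinearEquiv.coe_coe, assoc_symm_tmul]
  induction f h using TensorProduct.induction_on with
  | zero => simp
  | tmul x y => simp
  | add x y hx hy => simp only [tmul_add, map_add, hx, hy]

noncomputable def coinvariantProjection (act : M ⊗[R] H →ₗ[R] M) (ρ : M →ₗ[R] M ⊗[R] H) :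
    M →ₗ[R] M :=
  act ∘ₗ lTensor M (HopfAlgebra.antipode R) ∘ₗ ρ

theorem comp_coinvariantProjection_eq_flip_mk_one
    {act : M ⊗[R] H →ₗ[R] M} {ρ : M →ₗ[R] M ⊗[R] H}
    (hcoassoc : rTensor H ρ ∘ₗ ρ =
      (TensorProduct.assoc R M H H).symm.toLinearMap ∘ₗ lTensor M comul ∘ₗ ρ)
    (hcompat : ρ ∘ₗ act = map act (mul' R H) ∘ₗ (tensorTensorTensorComm R M H H H).toLinearMap ∘ₗ
      map ρ comul) :
    ρ ∘ₗ coinvariantProjection act ρ = (mk R M H).flip 1 ∘ₗ coinvariantProjection act ρ := by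
  have hconv : mul' R (H ⊗[R] H) ∘ₗ
      map (Algebra.TensorProduct.includeRight : H →ₐ[R] H ⊗[R] H).toLinearMap
        (comul ∘ₗ HopfAlgebra.antipode R) ∘ₗ comul =
      (Algebra.TensorProduct.includeLeft : H →ₐ[R] H ⊗[R] H).toLinearMap ∘ₗ
        HopfAlgebra.antipode R :=
    congr(ofConv $(HopfAlgebra.includeRight_convMul_comul_comp_antipode))
  calc ρ ∘ₗ act ∘ₗ lTensor M (HopfAlgebra.antipode R) ∘ₗ ρ
      = map act (mul' R H) ∘ₗ (tensorTensorTensorComm R M H H H).toLinearMap ∘ₗ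
          lTensor (M ⊗[R] H) (comul ∘ₗ HopfAlgebra.antipode R) ∘ₗ rTensor H ρ ∘ₗ ρ := by
        rw [← comp_assoc, hcompat]
        simp only [comp_assoc]
        rw [← comp_assoc ρ (rTensor H ρ), lTensor_comp_rTensor, ← map_comp_lTensor, comp_assoc]
    _ = map act (mul' R H) ∘ₗ (tensorTensorTensorComm R M H H H).toLinearMap ∘ₗ
          lTensor (M ⊗[R] H) (comul ∘ₗ HopfAlgebra.antipode R) ∘ₗ
            (TensorProduct.assoc R M H H).symm.toLinearMap ∘ₗ lTensor M comul ∘ₗ ρ := by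
        rw [hcoassoc]
    _ = rTensor H act ∘ₗ (TensorProduct.assoc R M H H).symm.toLinearMap ∘ₗ
          lTensor M (mul' R (H ⊗[R] H) ∘ₗ
            map (Algebra.TensorProduct.includeRight : H →ₐ[R] H ⊗[R] H).toLinearMap
              (comul ∘ₗ HopfAlgebra.antipode R)) ∘ₗ lTensor M comul ∘ₗ ρ := by
        simpa only [comp_assoc] using
          congr($(map_mul'_comp_tensorTensorTensorComm_comp_lTensor act
            (comul ∘ₗ HopfAlgebra.antipode R)) ∘ₗ lTensor M comul ∘ₗ ρ)
    _ = rTensor H act ∘ₗ (TensorProduct.assoc R M H H).symm.toLinearMap ∘ₗ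
          lTensor M ((Algebra.TensorProduct.includeLeft : H →ₐ[R] H ⊗[R] H).toLinearMap ∘ₗ
            HopfAlgebra.antipode R) ∘ₗ ρ := by
        simp only [← hconv, lTensor_comp, comp_assoc]
    _ = (mk R M H).flip 1 ∘ₗ act ∘ₗ lTensor M (HopfAlgebra.antipode R) ∘ₗ ρ := by
        simp only [← comp_assoc]
        congr 1
        ext n h
        simp

theorem coinvariantProjection_apply_of_coinvariant
    {act : M ⊗[R] H →ₗ[R] M} {ρ : M →ₗ[R] M ⊗[R] H}
    (hone : ∀ m : M, act (m ⊗ₜ[R] (1 : H)) = m) {m : M} (hm : ρ m = m ⊗ₜ[R] (1 : H)) :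
    coinvariantProjection act ρ m = m := by
  simp [coinvariantProjection, hm, hone]

end HopfModule

theorem rightHopfModule_projection
    (K : Type*) [Field K] (H : Type*) [Ring H] [HopfAlgebra K H]
    (M : Type*) [AddCommGroup M] [Module K M]
    (act : M ⊗[K] H →ₗ[K] M) (ρ : M →ₗ[K] M ⊗[K] H)
    (hM : IsRightHopfModule K H act ρ)
    -- P_R(m) = m₍₀₎ · S(m₍₁₎)
    (P : M →ₗ[K] M)
    (hP : P = act ∘ₗ lTensor M (HopfAlgebra.antipode (R := K)) ∘ₗ ρ) :
    (∀ m : M, ρ (P m) = (P m) ⊗ₜ[K] (1 : H)) ∧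
    (∀ m : M, ρ m = m ⊗ₜ[K] (1 : H) → P m = m) ∧
    P ∘ₗ P = P := by
  obtain ⟨-, hone, hcoassoc, -, hcompat⟩ := hM
  change P = coinvariantProjection act ρ at hP
  subst hP
  have hcoinv (m : M) : ρ (coinvariantProjection act ρ m) = coinvariantProjection act ρ m ⊗ₜ 1 :=
    congr($(comp_coinvariantProjection_eq_flip_mk_one hcoassoc hcompat) m)
  exact ⟨hcoinv, fun m hm => coinvariantProjection_apply_of_coinvariant hone hm,
    LinearMap.ext fun m => coinvariantProjection_apply_of_coinvariant hone (hcoinv m)⟩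
end

section
/- Let C be a right H-Hopf module coalgebra over a Hopf algebra H. Then (C, P_R), where P_R(c) = c_(0) · S(c_(1)), is a Rota-Baxter coalgebra of weight −1; that is, (P_R ⊗ P_R)∘Δ = (id ⊗ P_R)∘Δ∘P_R + (P_R ⊗ id)∘Δ∘P_R − Δ∘P_R. -/
open TensorProduct LinearMap

/-- A right `H`-Hopf module coalgebra: a right Hopf module `C` with a coassociative
comultiplication `D` satisfying `c₍₀₎₁ ⊗ c₍₀₎₂ ⊗ c₍₁₎ = c₁ ⊗ c₂₍₀₎ ⊗ c₂₍₁₎` and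
`Δ(c·h) = c₁·h₁ ⊗ c₂·h₂`. -/
def IsRightHopfModuleCoalgebra (K : Type*) [Field K] (H : Type*) [Ring H] [HopfAlgebra K H]
    {C : Type*} [AddCommGroup C] [Module K C]
    (act : C ⊗[K] H →ₗ[K] C) (ρ : C →ₗ[K] C ⊗[K] H) (D : C →ₗ[K] C ⊗[K] C) : Prop :=
  IsRightHopfModule K H act ρ ∧
  -- coassociativity of D
  (rTensor C D ∘ₗ D = (TensorProduct.assoc K C C C).symm.toLinearMap ∘ₗ lTensor C D ∘ₗ D) ∧
  -- c₍₀₎₁ ⊗ c₍₀₎₂ ⊗ c₍₁₎ = c₁ ⊗ c₂₍₀₎ ⊗ c₂₍₁₎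
  (rTensor H D ∘ₗ ρ = (TensorProduct.assoc K C C H).symm.toLinearMap ∘ₗ lTensor C ρ ∘ₗ D) ∧
  -- Δ(c·h) = c₁·h₁ ⊗ c₂·h₂
  (D ∘ₗ act =
    TensorProduct.map act act ∘ₗ (tensorTensorTensorComm K C C H H).toLinearMap ∘ₗ
      TensorProduct.map D (Coalgebra.comul (R := K)))

/-- `(C, Q)` is a Rota–Baxter coalgebra of weight `γ`:
`Q(c₁)⊗Q(c₂) = Q(c)₁⊗Q(Q(c)₂) + Q(Q(c)₁)⊗Q(c)₂ + γ Q(c)₁⊗Q(c)₂`. -/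
def IsRotaBaxterCoalgebra (K : Type*) [Field K] {C : Type*} [AddCommGroup C] [Module K C]
    (D : C →ₗ[K] C ⊗[K] C) (Q : C →ₗ[K] C) (γ : K) : Prop :=
  TensorProduct.map Q Q ∘ₗ D =
    lTensor C Q ∘ₗ D ∘ₗ Q + rTensor C Q ∘ₗ D ∘ₗ Q + γ • (D ∘ₗ Q)



section Conv
variable (K : Type*) [CommRing K] {V A : Type*} [AddCommGroup V] [Module K V]
  [Ring A] [Algebra K A]
variable (dV : V →ₗ[K] V ⊗[K] V) (eV : V →ₗ[K] K)

noncomputable def conv (f g : V →ₗ[K] A) : V →ₗ[K] A :=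
  mul' K A ∘ₗ TensorProduct.map f g ∘ₗ dV

noncomputable def convUnit : V →ₗ[K] A := Algebra.linearMap K A ∘ₗ eV

lemma conv_assoc
    (hco : rTensor V dV ∘ₗ dV =
      (TensorProduct.assoc K V V V).symm.toLinearMap ∘ₗ lTensor V dV ∘ₗ dV)
    (f g h : V →ₗ[K] A) :
    conv K dV (conv K dV f g) h = conv K dV f (conv K dV g h) := by
  unfold conv
  have h1 : TensorProduct.map (mul' K A ∘ₗ TensorProduct.map f g ∘ₗ dV) h
      = rTensor A (mul' K A ∘ₗ TensorProduct.map f g) ∘ₗ lTensor (V ⊗[K] V) h ∘ₗ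
        rTensor V dV := by
    ext x y; simp
  have h2 : TensorProduct.map f (mul' K A ∘ₗ TensorProduct.map g h ∘ₗ dV)
      = TensorProduct.map f (mul' K A ∘ₗ TensorProduct.map g h) ∘ₗ
        lTensor V dV := by
    ext x y; simp
  have h3 : mul' K A ∘ₗ rTensor A (mul' K A ∘ₗ TensorProduct.map f g) ∘ₗ
        lTensor (V ⊗[K] V) h ∘ₗ (TensorProduct.assoc K V V V).symm.toLinearMap
      = mul' K A ∘ₗ TensorProduct.map f (mul' K A ∘ₗ TensorProduct.map g h) := by
    ext x y z
    simp [mul_assoc]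
  rw [h1, h2]
  simp only [comp_assoc]
  rw [hco]
  apply LinearMap.ext; intro v
  simpa using DFunLike.congr_fun h3 (lTensor V dV (dV v))

lemma conv_unit_left
    (hl : (TensorProduct.lid K V).toLinearMap ∘ₗ rTensor V eV ∘ₗ dV = LinearMap.id)
    (f : V →ₗ[K] A) : conv K dV (convUnit K eV) f = f := by
  unfold conv convUnit
  have h1 : TensorProduct.map (Algebra.linearMap K A ∘ₗ eV) f
      = (TensorProduct.map (Algebra.linearMap K A) f) ∘ₗ rTensor V eV := by
    ext x y; simp
  have h2 : mul' K A ∘ₗ TensorProduct.map (Algebra.linearMap K A) f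
      = f ∘ₗ (TensorProduct.lid K V).toLinearMap := by
    ext x y; simp [Algebra.smul_def]
  rw [h1]
  simp only [← comp_assoc]
  rw [h2]
  simp only [comp_assoc]
  rw [hl, comp_id]

lemma conv_unit_right
    (hr : (TensorProduct.rid K V).toLinearMap ∘ₗ lTensor V eV ∘ₗ dV = LinearMap.id)
    (f : V →ₗ[K] A) : conv K dV f (convUnit K eV) = f := by
  unfold conv convUnit
  have h1 : TensorProduct.map f (Algebra.linearMap K A ∘ₗ eV)
      = (TensorProduct.map f (Algebra.linearMap K A)) ∘ₗ lTensor V eV := by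
    ext x y; simp
  have h2 : mul' K A ∘ₗ TensorProduct.map f (Algebra.linearMap K A)
      = f ∘ₗ (TensorProduct.rid K V).toLinearMap := by
    ext x y; simp [Algebra.smul_def, Algebra.commutes]
  rw [h1]
  simp only [← comp_assoc]
  rw [h2]
  simp only [comp_assoc]
  rw [hr, comp_id]

lemma conv_sandwich
    (hco : rTensor V dV ∘ₗ dV =
      (TensorProduct.assoc K V V V).symm.toLinearMap ∘ₗ lTensor V dV ∘ₗ dV)
    (hl : (TensorProduct.lid K V).toLinearMap ∘ₗ rTensor V eV ∘ₗ dV = LinearMap.id)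
    (hr : (TensorProduct.rid K V).toLinearMap ∘ₗ lTensor V eV ∘ₗ dV = LinearMap.id)
    {f g m : V →ₗ[K] A}
    (h1 : conv K dV g m = convUnit K eV) (h2 : conv K dV m f = convUnit K eV) :
    g = f := by
  have : conv K dV g (conv K dV m f) = conv K dV (conv K dV g m) f :=
    (conv_assoc K dV hco g m f).symm
  rw [h1, h2, conv_unit_left K dV eV hl, conv_unit_right K dV eV hr] at this
  exact this

end Conv

set_option maxHeartbeats 1000000
set_option synthInstance.maxHeartbeats 400000
set_option maxRecDepth 8000

section HopfFacts
open Coalgebra HopfAlgebra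
variable (K : Type*) [CommRing K] (H : Type*) [Ring H] [HopfAlgebra K H]

local notation "Δ" => Coalgebra.comul (R := K) (A := H)
local notation "ε" => Coalgebra.counit (R := K) (A := H)
local notation "μ" => LinearMap.mul' K H

/-- coassociativity in the `conv` format -/
lemma h_co : rTensor H Δ ∘ₗ Δ =
    (TensorProduct.assoc K H H H).symm.toLinearMap ∘ₗ lTensor H Δ ∘ₗ Δ :=
  Coalgebra.coassoc_symm.symm

lemma h_l : (TensorProduct.lid K H).toLinearMap ∘ₗ rTensor H ε ∘ₗ Δ = LinearMap.id := by
  apply LinearMap.ext; intro a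
  simp

lemma h_r : (TensorProduct.rid K H).toLinearMap ∘ₗ lTensor H ε ∘ₗ Δ = LinearMap.id := by
  apply LinearMap.ext; intro a
  simp

/-- multiplication on `H ⊗ H` as a composite -/
lemma mulHH : mul' K (H ⊗[K] H) =
    TensorProduct.map μ μ ∘ₗ (tensorTensorTensorComm K H H H H).toLinearMap := by
  apply TensorProduct.ext_fourfold'; intro w x y z
  simp [Algebra.TensorProduct.tmul_mul_tmul]

/-- the bialgebra axiom in composite form -/
lemma bialg : TensorProduct.map μ μ ∘ₗ (tensorTensorTensorComm K H H H H).toLinearMap ∘ₗ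
    TensorProduct.map Δ Δ = Δ ∘ₗ μ := by
  rw [show TensorProduct.map μ μ ∘ₗ (tensorTensorTensorComm K H H H H).toLinearMap ∘ₗ
    TensorProduct.map Δ Δ = (TensorProduct.map μ μ ∘ₗ
      (tensorTensorTensorComm K H H H H).toLinearMap) ∘ₗ TensorProduct.map Δ Δ from rfl,
    ← mulHH]
  apply TensorProduct.ext'; intro a b
  simp

/-- comultiplication of the tensor-square coalgebra -/
noncomputable def dT : H ⊗[K] H →ₗ[K] (H ⊗[K] H) ⊗[K] (H ⊗[K] H) :=
  (tensorTensorTensorComm K H H H H).toLinearMap ∘ₗ TensorProduct.map Δ Δ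

/-- counit of the tensor-square coalgebra -/
noncomputable def eT : H ⊗[K] H →ₗ[K] K := mul' K K ∘ₗ TensorProduct.map ε ε

lemma hcoT : rTensor (H ⊗[K] H) (dT K H) ∘ₗ dT K H =
    (TensorProduct.assoc K (H ⊗[K] H) (H ⊗[K] H) (H ⊗[K] H)).symm.toLinearMap ∘ₗ
      lTensor (H ⊗[K] H) (dT K H) ∘ₗ dT K H := by
  set Θ₁ := rTensor (H ⊗[K] H) (tensorTensorTensorComm K H H H H).toLinearMap ∘ₗ
      (tensorTensorTensorComm K (H ⊗[K] H) H (H ⊗[K] H) H).toLinearMap with hΘ₁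
  set Θ₂ := lTensor (H ⊗[K] H) (tensorTensorTensorComm K H H H H).toLinearMap ∘ₗ
      (tensorTensorTensorComm K H (H ⊗[K] H) H (H ⊗[K] H)).toLinearMap with hΘ₂
  have E1 : rTensor (H ⊗[K] H) (dT K H) ∘ₗ (tensorTensorTensorComm K H H H H).toLinearMap
      = Θ₁ ∘ₗ TensorProduct.map (rTensor H Δ) (rTensor H Δ) := by
    apply TensorProduct.ext_fourfold'; intro w x y z
    simp [dT, hΘ₁]
  have E2 : lTensor (H ⊗[K] H) (dT K H) ∘ₗ (tensorTensorTensorComm K H H H H).toLinearMap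
      = Θ₂ ∘ₗ TensorProduct.map (lTensor H Δ) (lTensor H Δ) := by
    apply TensorProduct.ext_fourfold'; intro w x y z
    simp [dT, hΘ₂]
  have E3 : Θ₁ ∘ₗ TensorProduct.map (TensorProduct.assoc K H H H).symm.toLinearMap
          (TensorProduct.assoc K H H H).symm.toLinearMap
      = (TensorProduct.assoc K (H ⊗[K] H) (H ⊗[K] H) (H ⊗[K] H)).symm.toLinearMap ∘ₗ Θ₂ := by
    apply TensorProduct.ext_fourfold'; intro w x y z
    induction x using TensorProduct.induction_on with
    | zero => simp
    | tmul a b =>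
      induction z using TensorProduct.induction_on with
      | zero => simp
      | tmul c d => simp [hΘ₁, hΘ₂]
      | add u v hu hv => simp only [tmul_add, map_add, hu, hv]
    | add u v hu hv => simp only [tmul_add, add_tmul, map_add, hu, hv]
  have C1 : rTensor (H ⊗[K] H) (dT K H) ∘ₗ dT K H
      = Θ₁ ∘ₗ TensorProduct.map (rTensor H Δ ∘ₗ Δ) (rTensor H Δ ∘ₗ Δ) := by
    rw [TensorProduct.map_comp]
    exact congrArg (fun F => F ∘ₗ TensorProduct.map Δ Δ) E1
  have C2 : lTensor (H ⊗[K] H) (dT K H) ∘ₗ dT K H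
      = Θ₂ ∘ₗ TensorProduct.map (lTensor H Δ ∘ₗ Δ) (lTensor H Δ ∘ₗ Δ) := by
    rw [TensorProduct.map_comp]
    exact congrArg (fun F => F ∘ₗ TensorProduct.map Δ Δ) E2
  rw [C1, C2, h_co]
  rw [show ((TensorProduct.assoc K H H H).symm.toLinearMap ∘ₗ lTensor H Δ ∘ₗ Δ)
      = ((TensorProduct.assoc K H H H).symm.toLinearMap ∘ₗ (lTensor H Δ ∘ₗ Δ)) from rfl,
    TensorProduct.map_comp]
  rw [show Θ₁ ∘ₗ TensorProduct.map (TensorProduct.assoc K H H H).symm.toLinearMap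
        (TensorProduct.assoc K H H H).symm.toLinearMap ∘ₗ
        TensorProduct.map (lTensor H Δ ∘ₗ Δ) (lTensor H Δ ∘ₗ Δ)
      = (Θ₁ ∘ₗ TensorProduct.map (TensorProduct.assoc K H H H).symm.toLinearMap
        (TensorProduct.assoc K H H H).symm.toLinearMap) ∘ₗ
        TensorProduct.map (lTensor H Δ ∘ₗ Δ) (lTensor H Δ ∘ₗ Δ) from rfl, E3]
  rfl

lemma hlT : (TensorProduct.lid K (H ⊗[K] H)).toLinearMap ∘ₗ rTensor (H ⊗[K] H) (eT K H) ∘ₗ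
    dT K H = LinearMap.id := by
  have E : (TensorProduct.lid K (H ⊗[K] H)).toLinearMap ∘ₗ rTensor (H ⊗[K] H) (eT K H) ∘ₗ
        (tensorTensorTensorComm K H H H H).toLinearMap
      = TensorProduct.map ((TensorProduct.lid K H).toLinearMap ∘ₗ rTensor H ε)
          ((TensorProduct.lid K H).toLinearMap ∘ₗ rTensor H ε) := by
    apply TensorProduct.ext_fourfold'; intro w x y z
    simp [eT, mul'_apply, smul_smul, TensorProduct.smul_tmul', TensorProduct.tmul_smul,
      mul_comm]
  calc (TensorProduct.lid K (H ⊗[K] H)).toLinearMap ∘ₗ rTensor (H ⊗[K] H) (eT K H) ∘ₗ dT K H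
      = ((TensorProduct.lid K (H ⊗[K] H)).toLinearMap ∘ₗ rTensor (H ⊗[K] H) (eT K H) ∘ₗ
          (tensorTensorTensorComm K H H H H).toLinearMap) ∘ₗ TensorProduct.map Δ Δ := rfl
    _ = TensorProduct.map ((TensorProduct.lid K H).toLinearMap ∘ₗ rTensor H ε)
          ((TensorProduct.lid K H).toLinearMap ∘ₗ rTensor H ε) ∘ₗ
          TensorProduct.map Δ Δ := by rw [E]
    _ = TensorProduct.map ((TensorProduct.lid K H).toLinearMap ∘ₗ rTensor H ε ∘ₗ Δ)
          ((TensorProduct.lid K H).toLinearMap ∘ₗ rTensor H ε ∘ₗ Δ) := by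
        rw [← TensorProduct.map_comp]; rfl
    _ = LinearMap.id := by rw [h_l, TensorProduct.map_id]

lemma hrT : (TensorProduct.rid K (H ⊗[K] H)).toLinearMap ∘ₗ lTensor (H ⊗[K] H) (eT K H) ∘ₗ
    dT K H = LinearMap.id := by
  have E : (TensorProduct.rid K (H ⊗[K] H)).toLinearMap ∘ₗ lTensor (H ⊗[K] H) (eT K H) ∘ₗ
        (tensorTensorTensorComm K H H H H).toLinearMap
      = TensorProduct.map ((TensorProduct.rid K H).toLinearMap ∘ₗ lTensor H ε)
          ((TensorProduct.rid K H).toLinearMap ∘ₗ lTensor H ε) := by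
    apply TensorProduct.ext_fourfold'; intro w x y z
    simp [eT, mul'_apply, smul_smul, TensorProduct.smul_tmul', TensorProduct.tmul_smul,
      mul_comm]
  calc (TensorProduct.rid K (H ⊗[K] H)).toLinearMap ∘ₗ lTensor (H ⊗[K] H) (eT K H) ∘ₗ dT K H
      = ((TensorProduct.rid K (H ⊗[K] H)).toLinearMap ∘ₗ lTensor (H ⊗[K] H) (eT K H) ∘ₗ
          (tensorTensorTensorComm K H H H H).toLinearMap) ∘ₗ TensorProduct.map Δ Δ := rfl
    _ = TensorProduct.map ((TensorProduct.rid K H).toLinearMap ∘ₗ lTensor H ε)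
          ((TensorProduct.rid K H).toLinearMap ∘ₗ lTensor H ε) ∘ₗ
          TensorProduct.map Δ Δ := by rw [E]
    _ = TensorProduct.map ((TensorProduct.rid K H).toLinearMap ∘ₗ lTensor H ε ∘ₗ Δ)
          ((TensorProduct.rid K H).toLinearMap ∘ₗ lTensor H ε ∘ₗ Δ) := by
        rw [← TensorProduct.map_comp]; rfl
    _ = LinearMap.id := by rw [h_r, TensorProduct.map_id]

end HopfFacts

section Antipode
open Coalgebra HopfAlgebra
variable (K : Type*) [CommRing K] (H : Type*) [Ring H] [HopfAlgebra K H]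

local notation "Δ" => Coalgebra.comul (R := K) (A := H)
local notation "ε" => Coalgebra.counit (R := K) (A := H)
local notation "μ" => LinearMap.mul' K H
local notation "𝑺" => HopfAlgebra.antipode (R := K) (A := H)

/-- The antipode is anti-multiplicative, in composite form. -/
theorem antipode_mul_anti : 𝑺 ∘ₗ μ =
    μ ∘ₗ TensorProduct.map 𝑺 𝑺 ∘ₗ (TensorProduct.comm K H H).toLinearMap := by
  apply conv_sandwich K (dT K H) (eT K H) (hcoT K H) (hlT K H) (hrT K H)
    (m := μ)
  · -- conv (S∘μ) μ = unit
    unfold conv convUnit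
    have e1 : TensorProduct.map (𝑺 ∘ₗ μ) μ = rTensor H 𝑺 ∘ₗ TensorProduct.map μ μ := by
      apply TensorProduct.ext_fourfold'; intro w x y z; simp
    calc μ ∘ₗ TensorProduct.map (𝑺 ∘ₗ μ) μ ∘ₗ dT K H
        = (μ ∘ₗ rTensor H 𝑺) ∘ₗ (TensorProduct.map μ μ ∘ₗ (tensorTensorTensorComm K H H H H).toLinearMap ∘ₗ TensorProduct.map Δ Δ) := by
          rw [e1]; rfl
      _ = (μ ∘ₗ rTensor H 𝑺) ∘ₗ (Δ ∘ₗ μ) := by rw [bialg]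
      _ = (μ ∘ₗ rTensor H 𝑺 ∘ₗ Δ) ∘ₗ μ := rfl
      _ = (Algebra.linearMap K H ∘ₗ ε) ∘ₗ μ := by rw [mul_antipode_rTensor_comul]
      _ = Algebra.linearMap K H ∘ₗ eT K H := by
          apply TensorProduct.ext'; intro a b
          simp [eT]
  · -- conv μ (μ∘(S⊗S)∘τ) = unit
    unfold conv convUnit
    set F := μ ∘ₗ TensorProduct.map 𝑺 𝑺 ∘ₗ (TensorProduct.comm K H H).toLinearMap with hF
    set E := μ ∘ₗ lTensor H μ ∘ₗ lTensor H (lTensor H 𝑺) ∘ₗ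
      lTensor H (TensorProduct.comm K H H).toLinearMap ∘ₗ
      (TensorProduct.assoc K H H H).toLinearMap with hE
    have C1 : μ ∘ₗ TensorProduct.map μ F ∘ₗ (tensorTensorTensorComm K H H H H).toLinearMap
        = E ∘ₗ lTensor (H ⊗[K] H) (μ ∘ₗ lTensor H 𝑺) := by
      apply TensorProduct.ext_fourfold'; intro w x y z
      simp [hF, hE, mul_assoc]
    have C2 : E ∘ₗ (TensorProduct.mk K (H ⊗[K] H) H).flip 1 = μ ∘ₗ lTensor H 𝑺 := by
      apply TensorProduct.ext'; intro x y
      simp [hE]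
    calc μ ∘ₗ TensorProduct.map μ F ∘ₗ dT K H
        = (μ ∘ₗ TensorProduct.map μ F ∘ₗ (tensorTensorTensorComm K H H H H).toLinearMap) ∘ₗ TensorProduct.map Δ Δ := rfl
      _ = E ∘ₗ (lTensor (H ⊗[K] H) (μ ∘ₗ lTensor H 𝑺) ∘ₗ TensorProduct.map Δ Δ) := by
          rw [C1]; rfl
      _ = E ∘ₗ TensorProduct.map Δ (μ ∘ₗ lTensor H 𝑺 ∘ₗ Δ) := by
          rw [lTensor_comp_map]; rfl
      _ = E ∘ₗ TensorProduct.map Δ (Algebra.linearMap K H ∘ₗ ε) := by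
          rw [mul_antipode_lTensor_comul]
      _ = Algebra.linearMap K H ∘ₗ eT K H := by
          apply TensorProduct.ext'; intro a b
          have h2 := DFunLike.congr_fun C2 (Δ a)
          simp only [coe_comp, Function.comp_apply, TensorProduct.mk_apply,
            LinearMap.flip_apply] at h2
          have key : (Δ a) ⊗ₜ[K] ((Algebra.linearMap K H) (ε b))
              = (ε b) • ((Δ a) ⊗ₜ[K] (1 : H)) := by
            rw [Algebra.linearMap_apply, Algebra.algebraMap_eq_smul_one, tmul_smul]
          simp only [coe_comp, Function.comp_apply, TensorProduct.map_tmul]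
          rw [key, map_smul, h2, mul_antipode_lTensor_comul_apply]
          simp only [eT, coe_comp, Function.comp_apply, TensorProduct.map_tmul, mul'_apply,
            Algebra.linearMap_apply, Algebra.smul_def, ← map_mul]
          rw [mul_comm]

/-- The antipode is anti-comultiplicative, in composite form. -/
theorem antipode_comul_anti : Δ ∘ₗ 𝑺 =
    (TensorProduct.comm K H H).toLinearMap ∘ₗ TensorProduct.map 𝑺 𝑺 ∘ₗ Δ := by
  apply conv_sandwich K Δ ε (h_co K H) (h_l K H) (h_r K H) (m := Δ)
  · -- conv (Δ∘S) Δ = unit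
    unfold conv convUnit
    have e1 : TensorProduct.map (Δ ∘ₗ 𝑺) Δ = TensorProduct.map Δ Δ ∘ₗ rTensor H 𝑺 := by
      apply TensorProduct.ext'; intro a b; simp
    have e2 : mul' K (H ⊗[K] H) ∘ₗ TensorProduct.map Δ Δ = Δ ∘ₗ μ := by
      rw [mulHH]; exact bialg K H
    have e3 : Δ ∘ₗ Algebra.linearMap K H = Algebra.linearMap K (H ⊗[K] H) := by
      apply LinearMap.ext; intro r; simp
    calc mul' K (H ⊗[K] H) ∘ₗ TensorProduct.map (Δ ∘ₗ 𝑺) Δ ∘ₗ Δ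
        = (mul' K (H ⊗[K] H) ∘ₗ TensorProduct.map Δ Δ) ∘ₗ (rTensor H 𝑺 ∘ₗ Δ) := by
          rw [e1]; rfl
      _ = Δ ∘ₗ (μ ∘ₗ rTensor H 𝑺 ∘ₗ Δ) := by rw [e2]; rfl
      _ = Δ ∘ₗ (Algebra.linearMap K H ∘ₗ ε) := by rw [mul_antipode_rTensor_comul]
      _ = Algebra.linearMap K (H ⊗[K] H) ∘ₗ ε := by rw [← e3]; rfl
  · -- conv Δ (τ∘(S⊗S)∘Δ) = unit
    unfold conv convUnit
    set F := (TensorProduct.comm K H H).toLinearMap ∘ₗ TensorProduct.map 𝑺 𝑺 ∘ₗ Δ with hF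
    set g := (TensorProduct.comm K H H).toLinearMap ∘ₗ TensorProduct.map 𝑺 𝑺 with hg
    set T0 := mul' K (H ⊗[K] H) ∘ₗ lTensor (H ⊗[K] H) g with hT0
    set Φ := (TensorProduct.assoc K H H (H ⊗[K] H)).symm.toLinearMap ∘ₗ
      lTensor H (TensorProduct.assoc K H H H).toLinearMap with hΦ
    set T2 := rTensor H μ ∘ₗ (TensorProduct.assoc K H H H).symm.toLinearMap ∘ₗ
      lTensor H (rTensor H 𝑺) ∘ₗ lTensor H (TensorProduct.comm K H H).toLinearMap with hT2
    have e1 : TensorProduct.map Δ F = lTensor (H ⊗[K] H) g ∘ₗ TensorProduct.map Δ Δ := by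
      apply TensorProduct.ext'; intro a b; simp [hF, hg]
    have s1 : TensorProduct.map Δ Δ = lTensor (H ⊗[K] H) Δ ∘ₗ rTensor H Δ := by
      apply TensorProduct.ext'; intro a b; simp
    have s3 : lTensor (H ⊗[K] H) Δ ∘ₗ (TensorProduct.assoc K H H H).symm.toLinearMap
        = (TensorProduct.assoc K H H (H ⊗[K] H)).symm.toLinearMap ∘ₗ
          lTensor H (lTensor H Δ) := by
      apply TensorProduct.ext'; intro x yz
      induction yz using TensorProduct.induction_on with
      | zero => simp
      | tmul y z => simp
      | add u v hu hv => simp only [tmul_add, map_add, hu, hv]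
    have s4 : lTensor H (TensorProduct.assoc K H H H).toLinearMap ∘ₗ
        lTensor H (TensorProduct.assoc K H H H).symm.toLinearMap
        = LinearMap.id (M := H ⊗[K] (H ⊗[K] (H ⊗[K] H))) := by
      rw [← lTensor_comp]
      apply LinearMap.ext; intro x; simp
    -- D1 : map Δ Δ ∘ Δ = Φ ∘ lTensor H (rTensor H Δ ∘ Δ) ∘ Δ
    have D1 : TensorProduct.map Δ Δ ∘ₗ Δ =
        Φ ∘ₗ lTensor H (rTensor H Δ ∘ₗ Δ) ∘ₗ Δ := by
      have w1 : TensorProduct.map Δ Δ ∘ₗ Δ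
          = lTensor (H ⊗[K] H) Δ ∘ₗ (rTensor H Δ ∘ₗ Δ) :=
        congrArg (fun F => F ∘ₗ Δ) s1
      rw [w1, h_co]
      calc lTensor (H ⊗[K] H) Δ ∘ₗ (TensorProduct.assoc K H H H).symm.toLinearMap ∘ₗ
            lTensor H Δ ∘ₗ Δ
          = (lTensor (H ⊗[K] H) Δ ∘ₗ (TensorProduct.assoc K H H H).symm.toLinearMap) ∘ₗ
            lTensor H Δ ∘ₗ Δ := rfl
        _ = ((TensorProduct.assoc K H H (H ⊗[K] H)).symm.toLinearMap ∘ₗ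
            lTensor H (lTensor H Δ)) ∘ₗ lTensor H Δ ∘ₗ Δ := by rw [s3]
        _ = (TensorProduct.assoc K H H (H ⊗[K] H)).symm.toLinearMap ∘ₗ
            (lTensor H (lTensor H Δ) ∘ₗ lTensor H Δ) ∘ₗ Δ := rfl
        _ = Φ ∘ₗ lTensor H ((TensorProduct.assoc K H H H).symm.toLinearMap ∘ₗ
              lTensor H Δ ∘ₗ Δ) ∘ₗ Δ := by
            rw [hΦ]
            have : lTensor H ((TensorProduct.assoc K H H H).symm.toLinearMap ∘ₗ
                lTensor H Δ ∘ₗ Δ) = lTensor H (TensorProduct.assoc K H H H).symm.toLinearMap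
                ∘ₗ lTensor H (lTensor H Δ) ∘ₗ lTensor H Δ := by
              rw [← lTensor_comp, ← lTensor_comp]
            rw [this]
            calc (TensorProduct.assoc K H H (H ⊗[K] H)).symm.toLinearMap ∘ₗ
                  (lTensor H (lTensor H Δ) ∘ₗ lTensor H Δ) ∘ₗ Δ
                = (TensorProduct.assoc K H H (H ⊗[K] H)).symm.toLinearMap ∘ₗ
                  ((lTensor H (TensorProduct.assoc K H H H).toLinearMap ∘ₗ
                    lTensor H (TensorProduct.assoc K H H H).symm.toLinearMap) ∘ₗ
                  lTensor H (lTensor H Δ) ∘ₗ lTensor H Δ) ∘ₗ Δ := by rw [s4]; rfl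
              _ = _ := rfl
    have C5 : T0 ∘ₗ Φ = T2 ∘ₗ lTensor H (rTensor H (μ ∘ₗ lTensor H 𝑺)) := by
      apply TensorProduct.ext'; intro x p
      induction p using TensorProduct.induction_on with
      | zero => simp
      | tmul q w =>
        induction q using TensorProduct.induction_on with
        | zero => simp [tmul_zero, zero_tmul]
        | tmul y z => simp [hT0, hΦ, hT2, hg, Algebra.TensorProduct.tmul_mul_tmul]
        | add u v hu hv => simp only [add_tmul, tmul_add, map_add, hu, hv]
      | add u v hu hv => simp only [tmul_add, map_add, hu, hv]
    have C3 : rTensor H (Algebra.linearMap K H ∘ₗ ε) ∘ₗ Δ = TensorProduct.mk K H H 1 := by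
      apply LinearMap.ext; intro h
      have : rTensor H (Algebra.linearMap K H ∘ₗ ε) = rTensor H (Algebra.linearMap K H) ∘ₗ
        rTensor H ε := by rw [← rTensor_comp]
      simp [this]
    have C4 : T2 ∘ₗ lTensor H (TensorProduct.mk K H H 1)
        = (TensorProduct.mk K H H).flip 1 ∘ₗ (μ ∘ₗ lTensor H 𝑺) := by
      apply TensorProduct.ext'; intro x k; simp [hT2]
    calc mul' K (H ⊗[K] H) ∘ₗ TensorProduct.map Δ F ∘ₗ Δ
        = T0 ∘ₗ (TensorProduct.map Δ Δ ∘ₗ Δ) := by rw [e1]; rfl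
      _ = (T0 ∘ₗ Φ) ∘ₗ lTensor H (rTensor H Δ ∘ₗ Δ) ∘ₗ Δ := by rw [D1]; rfl
      _ = T2 ∘ₗ (lTensor H (rTensor H (μ ∘ₗ lTensor H 𝑺)) ∘ₗ
            lTensor H (rTensor H Δ ∘ₗ Δ)) ∘ₗ Δ := by rw [C5]; rfl
      _ = T2 ∘ₗ lTensor H (rTensor H (μ ∘ₗ lTensor H 𝑺 ∘ₗ Δ) ∘ₗ Δ) ∘ₗ Δ := by
          rw [← lTensor_comp]
          have : (rTensor H (μ ∘ₗ lTensor H 𝑺) ∘ₗ rTensor H Δ) ∘ₗ Δ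
              = rTensor H (μ ∘ₗ lTensor H 𝑺 ∘ₗ Δ) ∘ₗ Δ := by
            rw [← rTensor_comp]; rfl
          rw [show rTensor H (μ ∘ₗ lTensor H 𝑺) ∘ₗ (rTensor H Δ ∘ₗ Δ)
            = (rTensor H (μ ∘ₗ lTensor H 𝑺) ∘ₗ rTensor H Δ) ∘ₗ Δ from rfl, this]
      _ = T2 ∘ₗ lTensor H (rTensor H (Algebra.linearMap K H ∘ₗ ε) ∘ₗ Δ) ∘ₗ Δ := by
          rw [mul_antipode_lTensor_comul]
      _ = (T2 ∘ₗ lTensor H (TensorProduct.mk K H H 1)) ∘ₗ Δ := by rw [C3]; rfl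
      _ = (TensorProduct.mk K H H).flip 1 ∘ₗ (μ ∘ₗ lTensor H 𝑺 ∘ₗ Δ) := by rw [C4]; rfl
      _ = (TensorProduct.mk K H H).flip 1 ∘ₗ (Algebra.linearMap K H ∘ₗ ε) := by
          rw [mul_antipode_lTensor_comul]
      _ = Algebra.linearMap K (H ⊗[K] H) ∘ₗ ε := by
          apply LinearMap.ext; intro h
          simp [Algebra.TensorProduct.algebraMap_apply]

end Antipode

open Coalgebra HopfAlgebra in
theorem rightHopfModuleCoalgebra_rotaBaxter
    (K : Type*) [Field K] (H : Type*) [Ring H] [HopfAlgebra K H]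
    (C : Type*) [AddCommGroup C] [Module K C]
    (act : C ⊗[K] H →ₗ[K] C) (ρ : C →ₗ[K] C ⊗[K] H) (D : C →ₗ[K] C ⊗[K] C)
    (hC : IsRightHopfModuleCoalgebra K H act ρ D)
    (P : C →ₗ[K] C)
    (hP : P = act ∘ₗ lTensor C (HopfAlgebra.antipode (R := K)) ∘ₗ ρ) :
    IsRotaBaxterCoalgebra K D P (-1) := by
  obtain ⟨⟨hA1, hA2, hR1, hR2, hCP⟩, hDco, hmix, hDact⟩ := hC
  set S : H →ₗ[K] H := HopfAlgebra.antipode (R := K) with hS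
  set μ : H ⊗[K] H →ₗ[K] H := mul' K H with hμ
  set Δ : H →ₗ[K] H ⊗[K] H := Coalgebra.comul (R := K) with hΔ
  set ε : H →ₗ[K] K := Coalgebra.counit (R := K) with hε
  -- the counit-collapse map
  set R : C ⊗[K] H →ₗ[K] C := (TensorProduct.rid K C).toLinearMap ∘ₗ lTensor C ε with hR
  -- ### Key lemma : P ∘ act = P ∘ (counit collapse)
  have C6 : act ∘ₗ TensorProduct.map act (μ ∘ₗ TensorProduct.map S S ∘ₗ
        (TensorProduct.comm K H H).toLinearMap) ∘ₗ
        (tensorTensorTensorComm K C H H H).toLinearMap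
      = act ∘ₗ lTensor C μ ∘ₗ lTensor C (TensorProduct.comm K H H).toLinearMap ∘ₗ
        (TensorProduct.assoc K C H H).toLinearMap ∘ₗ
        TensorProduct.map (lTensor C S) (μ ∘ₗ lTensor H S) := by
    apply TensorProduct.ext_fourfold'; intro m a b c
    simp [hA1, hμ, mul'_apply, mul_assoc]
  have C7 : (act ∘ₗ lTensor C μ ∘ₗ lTensor C (TensorProduct.comm K H H).toLinearMap ∘ₗ
        (TensorProduct.assoc K C H H).toLinearMap) ∘ₗ
        (TensorProduct.mk K (C ⊗[K] H) H).flip 1 = act := by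
    apply TensorProduct.ext'; intro m a
    simp [hμ, mul'_apply]
  have keyc : P ∘ₗ act = P ∘ₗ R := by
    rw [hP]
    calc (act ∘ₗ lTensor C S ∘ₗ ρ) ∘ₗ act
        = act ∘ₗ lTensor C S ∘ₗ (ρ ∘ₗ act) := rfl
      _ = act ∘ₗ lTensor C S ∘ₗ (TensorProduct.map act μ ∘ₗ
            (tensorTensorTensorComm K C H H H).toLinearMap ∘ₗ
            TensorProduct.map ρ Δ) := by rw [hCP]
      _ = act ∘ₗ (lTensor C S ∘ₗ TensorProduct.map act μ) ∘ₗ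
            (tensorTensorTensorComm K C H H H).toLinearMap ∘ₗ
            TensorProduct.map ρ Δ := rfl
      _ = (act ∘ₗ TensorProduct.map act (S ∘ₗ μ) ∘ₗ
            (tensorTensorTensorComm K C H H H).toLinearMap) ∘ₗ
            TensorProduct.map ρ Δ := by rw [lTensor_comp_map]; rfl
      _ = (act ∘ₗ TensorProduct.map act (μ ∘ₗ TensorProduct.map S S ∘ₗ
            (TensorProduct.comm K H H).toLinearMap) ∘ₗ
            (tensorTensorTensorComm K C H H H).toLinearMap) ∘ₗ
            TensorProduct.map ρ Δ := by rw [hS, hμ, antipode_mul_anti K H]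
      _ = (act ∘ₗ lTensor C μ ∘ₗ lTensor C (TensorProduct.comm K H H).toLinearMap ∘ₗ
            (TensorProduct.assoc K C H H).toLinearMap) ∘ₗ
            (TensorProduct.map (lTensor C S) (μ ∘ₗ lTensor H S) ∘ₗ
              TensorProduct.map ρ Δ) := by rw [C6]; rfl
      _ = (act ∘ₗ lTensor C μ ∘ₗ lTensor C (TensorProduct.comm K H H).toLinearMap ∘ₗ
            (TensorProduct.assoc K C H H).toLinearMap) ∘ₗ
            TensorProduct.map (lTensor C S ∘ₗ ρ) ((μ ∘ₗ lTensor H S) ∘ₗ Δ) := by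
          rw [← TensorProduct.map_comp]
      _ = (act ∘ₗ lTensor C μ ∘ₗ lTensor C (TensorProduct.comm K H H).toLinearMap ∘ₗ
            (TensorProduct.assoc K C H H).toLinearMap) ∘ₗ
            TensorProduct.map (lTensor C S ∘ₗ ρ) (Algebra.linearMap K H ∘ₗ ε) := by
          rw [show (μ ∘ₗ lTensor H S) ∘ₗ Δ = μ ∘ₗ lTensor H S ∘ₗ Δ from rfl, hS, hμ, hΔ,
            mul_antipode_lTensor_comul, hε]
      _ = (act ∘ₗ lTensor C S ∘ₗ ρ) ∘ₗ R := by
          apply TensorProduct.ext'; intro m h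
          have key2 : (lTensor C S (ρ m)) ⊗ₜ[K] ((Algebra.linearMap K H) (ε h))
              = (ε h) • ((lTensor C S (ρ m)) ⊗ₜ[K] (1 : H)) := by
            rw [Algebra.linearMap_apply, Algebra.algebraMap_eq_smul_one, tmul_smul]
          have h7 := DFunLike.congr_fun C7 (lTensor C S (ρ m))
          simp only [coe_comp, Function.comp_apply, TensorProduct.mk_apply,
            LinearMap.flip_apply] at h7
          simp only [coe_comp, Function.comp_apply, TensorProduct.map_tmul, key2, map_smul, h7]
          simp [hR]
  -- ### the decomposition of D ∘ P
  have e_mDS : TensorProduct.map D (Δ ∘ₗ S) = lTensor (C ⊗[K] C) (Δ ∘ₗ S) ∘ₗ rTensor H D := by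
    apply TensorProduct.ext'; intro m h; simp
  set T3 : C ⊗[K] (C ⊗[K] H) →ₗ[K] C ⊗[K] C :=
    TensorProduct.map act act ∘ₗ (tensorTensorTensorComm K C C H H).toLinearMap ∘ₗ
      lTensor (C ⊗[K] C) (Δ ∘ₗ S) ∘ₗ (TensorProduct.assoc K C C H).symm.toLinearMap with hT3
  have hDP : D ∘ₗ P = T3 ∘ₗ lTensor C ρ ∘ₗ D := by
    rw [hP]
    calc D ∘ₗ act ∘ₗ lTensor C S ∘ₗ ρ
        = (D ∘ₗ act) ∘ₗ lTensor C S ∘ₗ ρ := rfl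
      _ = (TensorProduct.map act act ∘ₗ (tensorTensorTensorComm K C C H H).toLinearMap ∘ₗ
            TensorProduct.map D Δ) ∘ₗ lTensor C S ∘ₗ ρ := by rw [hDact]
      _ = TensorProduct.map act act ∘ₗ (tensorTensorTensorComm K C C H H).toLinearMap ∘ₗ
            (TensorProduct.map D Δ ∘ₗ lTensor C S) ∘ₗ ρ := rfl
      _ = TensorProduct.map act act ∘ₗ (tensorTensorTensorComm K C C H H).toLinearMap ∘ₗ
            TensorProduct.map D (Δ ∘ₗ S) ∘ₗ ρ := by rw [map_comp_lTensor]
      _ = TensorProduct.map act act ∘ₗ (tensorTensorTensorComm K C C H H).toLinearMap ∘ₗ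
            lTensor (C ⊗[K] C) (Δ ∘ₗ S) ∘ₗ (rTensor H D ∘ₗ ρ) := by rw [e_mDS]; rfl
      _ = TensorProduct.map act act ∘ₗ (tensorTensorTensorComm K C C H H).toLinearMap ∘ₗ
            lTensor (C ⊗[K] C) (Δ ∘ₗ S) ∘ₗ ((TensorProduct.assoc K C C H).symm.toLinearMap ∘ₗ
              lTensor C ρ ∘ₗ D) := by rw [hmix]
      _ = T3 ∘ₗ lTensor C ρ ∘ₗ D := rfl
  -- ### pointwise helper lemmas
  have A1c : rTensor C P ∘ₗ TensorProduct.map act act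
      = TensorProduct.map P act ∘ₗ rTensor (C ⊗[K] H) R := by
    rw [rTensor_comp_map, keyc, ← map_comp_rTensor]
  have A1p := fun z => DFunLike.congr_fun A1c z
  simp only [coe_comp, Function.comp_apply] at A1p
  have A2c : lTensor C P ∘ₗ TensorProduct.map act act
      = TensorProduct.map act P ∘ₗ lTensor (C ⊗[K] H) R := by
    rw [lTensor_comp_map, keyc, ← map_comp_lTensor]
  have A2p := fun z => DFunLike.congr_fun A2c z
  simp only [coe_comp, Function.comp_apply] at A2p
  have L1c : lTensor (C ⊗[K] C) (Δ ∘ₗ S)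
      = lTensor (C ⊗[K] C) Δ ∘ₗ lTensor (C ⊗[K] C) S := by rw [lTensor_comp]
  have L1p := fun z => DFunLike.congr_fun L1c z
  simp only [coe_comp, Function.comp_apply] at L1p
  have C13 : rTensor (C ⊗[K] H) R ∘ₗ (tensorTensorTensorComm K C C H H).toLinearMap ∘ₗ
      lTensor (C ⊗[K] C) Δ = (TensorProduct.assoc K C C H).toLinearMap := by
    apply TensorProduct.ext_threefold; intro x y h
    have aux : (rTensor (C ⊗[K] H) R ∘ₗ (tensorTensorTensorComm K C C H H).toLinearMap) ∘ₗ
        TensorProduct.mk K (C ⊗[K] C) (H ⊗[K] H) (x ⊗ₜ[K] y)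
        = TensorProduct.mk K C (C ⊗[K] H) x ∘ₗ TensorProduct.mk K C H y ∘ₗ
          (TensorProduct.lid K H).toLinearMap ∘ₗ rTensor H ε := by
      apply TensorProduct.ext'; intro u v
      simp [hR, TensorProduct.tmul_smul, ← TensorProduct.smul_tmul']
    have := DFunLike.congr_fun aux (Δ h)
    simpa [hΔ, hε] using this
  have C13p := fun z => DFunLike.congr_fun C13 z
  simp only [coe_comp, Function.comp_apply, LinearEquiv.coe_coe] at C13p
  have P7 : (TensorProduct.assoc K C C H).toLinearMap ∘ₗ lTensor (C ⊗[K] C) S ∘ₗ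
      (TensorProduct.assoc K C C H).symm.toLinearMap = lTensor C (lTensor C S) := by
    apply TensorProduct.ext'; intro x w
    induction w using TensorProduct.induction_on with
    | zero => simp
    | tmul y h => simp
    | add u v hu hv => simp only [tmul_add, map_add, hu, hv]
  have P7p := fun z => DFunLike.congr_fun P7 z
  simp only [coe_comp, Function.comp_apply, LinearEquiv.coe_coe] at P7p
  have hchainA : TensorProduct.map P act ∘ₗ lTensor C (lTensor C S) ∘ₗ lTensor C ρ
      = TensorProduct.map P P := by
    rw [← lTensor_comp, map_comp_lTensor]
    exact congrArg (fun F => TensorProduct.map P F) hP.symm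
  have hchainAp := fun z => DFunLike.congr_fun hchainA z
  simp only [coe_comp, Function.comp_apply] at hchainAp
  -- ### lemma A
  have lemA : rTensor C P ∘ₗ (D ∘ₗ P) = TensorProduct.map P P ∘ₗ D := by
    rw [hDP, hT3]
    apply LinearMap.ext; intro c
    simp only [coe_comp, Function.comp_apply, LinearEquiv.coe_coe]
    generalize D c = w
    rw [L1p, A1p, C13p, P7p, hchainAp]
  -- ### lemma B
  set σ' : (C ⊗[K] C) ⊗[K] H →ₗ[K] (C ⊗[K] H) ⊗[K] C :=
    (TensorProduct.assoc K C H C).symm.toLinearMap ∘ₗ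
      lTensor C (TensorProduct.comm K C H).toLinearMap ∘ₗ
      (TensorProduct.assoc K C C H).toLinearMap with hσ'
  have C9 : lTensor (C ⊗[K] H) R ∘ₗ (tensorTensorTensorComm K C C H H).toLinearMap ∘ₗ
      lTensor (C ⊗[K] C) Δ = σ' := by
    apply TensorProduct.ext_threefold; intro x y h
    have aux : (lTensor (C ⊗[K] H) R ∘ₗ (tensorTensorTensorComm K C C H H).toLinearMap) ∘ₗ
        TensorProduct.mk K (C ⊗[K] C) (H ⊗[K] H) (x ⊗ₜ[K] y)
        = (TensorProduct.mk K (C ⊗[K] H) C).flip y ∘ₗ TensorProduct.mk K C H x ∘ₗ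
          (TensorProduct.rid K H).toLinearMap ∘ₗ lTensor H ε := by
      apply TensorProduct.ext'; intro u v
      simp [hR, TensorProduct.tmul_smul, ← TensorProduct.smul_tmul']
    have := DFunLike.congr_fun aux (Δ h)
    simpa [hσ', hΔ, hε] using this
  have C9p := fun z => DFunLike.congr_fun C9 z
  simp only [coe_comp, Function.comp_apply, LinearEquiv.coe_coe] at C9p
  set G₂ : C ⊗[K] ((C ⊗[K] H) ⊗[K] H) →ₗ[K] (C ⊗[K] H) ⊗[K] (C ⊗[K] H) :=
    rTensor (C ⊗[K] H) (lTensor C S) ∘ₗ (TensorProduct.assoc K C H (C ⊗[K] H)).symm.toLinearMap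
      ∘ₗ lTensor C (TensorProduct.comm K (C ⊗[K] H) H).toLinearMap with hG₂
  have P5 : lTensor (C ⊗[K] H) ρ ∘ₗ σ' ∘ₗ lTensor (C ⊗[K] C) S ∘ₗ
      (TensorProduct.assoc K C C H).symm.toLinearMap = G₂ ∘ₗ lTensor C (rTensor H ρ) := by
    apply TensorProduct.ext'; intro x w
    induction w using TensorProduct.induction_on with
    | zero => simp
    | tmul y h => simp [hσ', hG₂]
    | add u v hu hv => simp only [tmul_add, map_add, hu, hv]
  have P5p := fun z => DFunLike.congr_fun P5 z
  simp only [coe_comp, Function.comp_apply, LinearEquiv.coe_coe] at P5p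
  have P3 : lTensor (C ⊗[K] C) Δ ∘ₗ (TensorProduct.assoc K C C H).symm.toLinearMap
      = (TensorProduct.assoc K C C (H ⊗[K] H)).symm.toLinearMap ∘ₗ
        lTensor C (lTensor C Δ) := by
    apply TensorProduct.ext'; intro x w
    induction w using TensorProduct.induction_on with
    | zero => simp
    | tmul y h => simp
    | add u v hu hv => simp only [tmul_add, map_add, hu, hv]
  have P3p := fun z => DFunLike.congr_fun P3 z
  simp only [coe_comp, Function.comp_apply, LinearEquiv.coe_coe] at P3p
  have P6 : TensorProduct.map act act ∘ₗ (tensorTensorTensorComm K C C H H).toLinearMap ∘ₗ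
      lTensor (C ⊗[K] C) ((TensorProduct.comm K H H).toLinearMap ∘ₗ TensorProduct.map S S) ∘ₗ
      (TensorProduct.assoc K C C (H ⊗[K] H)).symm.toLinearMap ∘ₗ
      lTensor C (TensorProduct.assoc K C H H).toLinearMap
      = TensorProduct.map act (act ∘ₗ lTensor C S) ∘ₗ G₂ := by
    apply TensorProduct.ext'; intro x w
    induction w using TensorProduct.induction_on with
    | zero => simp
    | tmul q b =>
      induction q using TensorProduct.induction_on with
      | zero => simp
      | tmul u a => simp [hG₂]
      | add u v hu hv => simp only [tmul_add, add_tmul, map_add, hu, hv]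
    | add u v hu hv => simp only [tmul_add, map_add, hu, hv]
  have P6p := fun z => DFunLike.congr_fun P6 z
  simp only [coe_comp, Function.comp_apply, LinearEquiv.coe_coe] at P6p
  have hR1' : lTensor C Δ ∘ₗ ρ =
      (TensorProduct.assoc K C H H).toLinearMap ∘ₗ rTensor H ρ ∘ₗ ρ := by
    apply LinearMap.ext; intro c
    have := DFunLike.congr_fun hR1 c
    simp only [coe_comp, Function.comp_apply, LinearEquiv.coe_coe] at this ⊢
    rw [this, LinearEquiv.apply_symm_apply]
  have LB1 : lTensor C (lTensor C Δ) ∘ₗ lTensor C ρ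
      = lTensor C (TensorProduct.assoc K C H H).toLinearMap ∘ₗ
        lTensor C (rTensor H ρ) ∘ₗ lTensor C ρ := by
    rw [← lTensor_comp, hR1', lTensor_comp, lTensor_comp]
  have LB1p := fun z => DFunLike.congr_fun LB1 z
  simp only [coe_comp, Function.comp_apply] at LB1p
  have CAc : lTensor (C ⊗[K] C) Δ ∘ₗ lTensor (C ⊗[K] C) S
      = lTensor (C ⊗[K] C) ((TensorProduct.comm K H H).toLinearMap ∘ₗ TensorProduct.map S S)
        ∘ₗ lTensor (C ⊗[K] C) Δ := by
    rw [← lTensor_comp, ← lTensor_comp]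
    exact congrArg (fun F => lTensor (C ⊗[K] C) F) (by rw [hΔ, hS]; exact antipode_comul_anti K H)
  have CAp := fun z => DFunLike.congr_fun CAc z
  simp only [coe_comp, Function.comp_apply] at CAp
  have MB : TensorProduct.map act P = TensorProduct.map act (act ∘ₗ lTensor C S) ∘ₗ
      lTensor (C ⊗[K] H) ρ := by
    rw [hP, show act ∘ₗ lTensor C S ∘ₗ ρ = (act ∘ₗ lTensor C S) ∘ₗ ρ from rfl,
      ← map_comp_lTensor]
  have MBp := fun z => DFunLike.congr_fun MB z
  simp only [coe_comp, Function.comp_apply] at MBp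
  have lemB : lTensor C P ∘ₗ (D ∘ₗ P) = D ∘ₗ P := by
    rw [hDP, hT3]
    apply LinearMap.ext; intro c
    simp only [coe_comp, Function.comp_apply, LinearEquiv.coe_coe]
    generalize D c = w
    rw [L1p, A2p, C9p, MBp, P5p, CAp, P3p, LB1p, P6p]
  -- ### assemble
  unfold IsRotaBaxterCoalgebra
  rw [show lTensor C P ∘ₗ D ∘ₗ P = lTensor C P ∘ₗ (D ∘ₗ P) from rfl, lemB,
    show rTensor C P ∘ₗ D ∘ₗ P = rTensor C P ∘ₗ (D ∘ₗ P) from rfl, lemA]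
  module
end

section
/- Let C be a coalgebra in the category of left H-Yetter-Drinfeld modules over a Hopf algebra H. Then the smash coproduct coalgebra C × H (underlying space C⊗H with Δ(c⊗h) = (c₁ ⊗ c₂_(−1)h₁) ⊗ (c₂_(0) ⊗ h₂)) together with the right H-action (c⊗h)·x = c ⊗ hx and right H-coaction ρ_R(c⊗h) = (c ⊗ h₁) ⊗ h₂ is a right H-Hopf module coalgebra. -/
open TensorProduct LinearMap

/-- A left Yetter--Drinfeld module over a Hopf algebra `H`: a left module `act` and a left
comodule `ρ` satisfying `h₁v₍₋₁₎ ⊗ h₂·v₍₀₎ = (h₁·v)₍₋₁₎h₂ ⊗ (h₁·v)₍₀₎`. -/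
def IsYetterDrinfeldModule (K : Type*) [Field K] (H : Type*) [Ring H] [HopfAlgebra K H]
    {V : Type*} [AddCommGroup V] [Module K V]
    (act : H ⊗[K] V →ₗ[K] V) (ρ : V →ₗ[K] H ⊗[K] V) : Prop :=
  -- left module axioms
  (∀ (h h' : H) (v : V), act (h ⊗ₜ[K] act (h' ⊗ₜ[K] v)) = act ((h * h') ⊗ₜ[K] v)) ∧
  (∀ v : V, act ((1 : H) ⊗ₜ[K] v) = v) ∧
  -- left comodule axioms
  (lTensor H ρ ∘ₗ ρ =
    (TensorProduct.assoc K H H V).toLinearMap ∘ₗ rTensor V (Coalgebra.comul (R := K)) ∘ₗ ρ) ∧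
  (∀ v : V, (TensorProduct.lid K V) ((rTensor V (Coalgebra.counit (R := K))) (ρ v)) = v) ∧
  -- Yetter--Drinfeld compatibility
  (TensorProduct.map (LinearMap.mul' K H) act ∘ₗ
      (tensorTensorTensorComm K H H H V).toLinearMap ∘ₗ
        TensorProduct.map (Coalgebra.comul (R := K)) ρ =
    rTensor V ((LinearMap.mul' K H) ∘ₗ (TensorProduct.comm K H H).toLinearMap) ∘ₗ
      (TensorProduct.assoc K H H V).symm.toLinearMap ∘ₗ
        lTensor H (ρ ∘ₗ act) ∘ₗ
          (TensorProduct.assoc K H H V).toLinearMap ∘ₗ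
            rTensor V (TensorProduct.comm K H H).toLinearMap ∘ₗ
              rTensor V (Coalgebra.comul (R := K)))

/-- A coalgebra in the category of left `H`-Yetter--Drinfeld modules:
a Yetter--Drinfeld module with a coassociative comultiplication `D` which is a
module-coalgebra (`Δ(h·c) = h₁·c₁ ⊗ h₂·c₂`) and a comodule-coalgebra
(`c₍₋₁₎ ⊗ c₍₀₎₁ ⊗ c₍₀₎₂ = c₁₍₋₁₎c₂₍₋₁₎ ⊗ c₁₍₀₎ ⊗ c₂₍₀₎`). -/
def IsYetterDrinfeldCoalgebra (K : Type*) [Field K] (H : Type*) [Ring H] [HopfAlgebra K H]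
    {C : Type*} [AddCommGroup C] [Module K C]
    (act : H ⊗[K] C →ₗ[K] C) (ρ : C →ₗ[K] H ⊗[K] C) (D : C →ₗ[K] C ⊗[K] C) : Prop :=
  IsYetterDrinfeldModule K H act ρ ∧
  -- coassociativity of D
  (rTensor C D ∘ₗ D = (TensorProduct.assoc K C C C).symm.toLinearMap ∘ₗ lTensor C D ∘ₗ D) ∧
  -- module-coalgebra
  (D ∘ₗ act =
    TensorProduct.map act act ∘ₗ (tensorTensorTensorComm K H H C C).toLinearMap ∘ₗ
      TensorProduct.map (Coalgebra.comul (R := K)) D) ∧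
  -- comodule-coalgebra
  (lTensor H D ∘ₗ ρ =
    TensorProduct.map (LinearMap.mul' K H) (LinearMap.id : C ⊗[K] C →ₗ[K] C ⊗[K] C) ∘ₗ
      (tensorTensorTensorComm K H C H C).toLinearMap ∘ₗ TensorProduct.map ρ ρ ∘ₗ D)

variable (K : Type*) [Field K] (H : Type*) [Ring H] [HopfAlgebra K H]
  (C : Type*) [AddCommGroup C] [Module K C]

/-- The smash coproduct comultiplication on `C ⊗ H`:
`Δ(c⊗h) = (c₁ ⊗ c₂₍₋₁₎h₁) ⊗ (c₂₍₀₎ ⊗ h₂)`. -/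
noncomputable def smashComul (ρ : C →ₗ[K] H ⊗[K] C) (D : C →ₗ[K] C ⊗[K] C) :
    C ⊗[K] H →ₗ[K] (C ⊗[K] H) ⊗[K] (C ⊗[K] H) :=
  (TensorProduct.assoc K C H (C ⊗[K] H)).symm.toLinearMap ∘ₗ
    lTensor C (TensorProduct.map (LinearMap.mul' K H)
        (LinearMap.id : C ⊗[K] H →ₗ[K] C ⊗[K] H) ∘ₗ
      (tensorTensorTensorComm K H C H H).toLinearMap) ∘ₗ
    (TensorProduct.assoc K C (H ⊗[K] C) (H ⊗[K] H)).toLinearMap ∘ₗ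
    lTensor (C ⊗[K] (H ⊗[K] C)) (Coalgebra.comul (R := K)) ∘ₗ
    rTensor H (lTensor C ρ ∘ₗ D)

/-- The right `H`-action on `C ⊗ H`: `(c⊗h)·x = c ⊗ hx`. -/
noncomputable def smashActR : (C ⊗[K] H) ⊗[K] H →ₗ[K] C ⊗[K] H :=
  lTensor C (LinearMap.mul' K H) ∘ₗ (TensorProduct.assoc K C H H).toLinearMap

/-- The right `H`-coaction on `C ⊗ H`: `ρ(c⊗h) = (c ⊗ h₁) ⊗ h₂`. -/
noncomputable def smashRhoR : C ⊗[K] H →ₗ[K] (C ⊗[K] H) ⊗[K] H :=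
  (TensorProduct.assoc K C H H).symm.toLinearMap ∘ₗ lTensor C (Coalgebra.comul (R := K))

/-! ### Auxiliary machinery -/

/-- The pure shuffle+multiply core of the smash coproduct. -/
noncomputable def smashPsi : (C ⊗[K] (H ⊗[K] C)) ⊗[K] (H ⊗[K] H) →ₗ[K] (C ⊗[K] H) ⊗[K] (C ⊗[K] H) :=
  (TensorProduct.assoc K C H (C ⊗[K] H)).symm.toLinearMap ∘ₗ
    lTensor C (TensorProduct.map (LinearMap.mul' K H)
        (LinearMap.id : C ⊗[K] H →ₗ[K] C ⊗[K] H) ∘ₗ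
      (tensorTensorTensorComm K H C H H).toLinearMap) ∘ₗ
    (TensorProduct.assoc K C (H ⊗[K] C) (H ⊗[K] H)).toLinearMap

@[simp] lemma smashPsi_tmul (c e : C) (x p q : H) :
    smashPsi K H C ((c ⊗ₜ[K] (x ⊗ₜ[K] e)) ⊗ₜ[K] (p ⊗ₜ[K] q)) =
      (c ⊗ₜ[K] (x * p)) ⊗ₜ[K] (e ⊗ₜ[K] q) := by
  simp [smashPsi]

lemma smashComul_eq (ρ : C →ₗ[K] H ⊗[K] C) (D : C →ₗ[K] C ⊗[K] C) :
    smashComul K H C ρ D =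
      smashPsi K H C ∘ₗ TensorProduct.map (lTensor C ρ ∘ₗ D) (Coalgebra.comul (R := K)) := by
  rw [smashComul, smashPsi]
  ext c h
  simp

lemma smashComul_apply (ρ : C →ₗ[K] H ⊗[K] C) (D : C →ₗ[K] C ⊗[K] C) (c : C) (h : H) :
    smashComul K H C ρ D (c ⊗ₜ[K] h) =
      smashPsi K H C ((lTensor C ρ (D c)) ⊗ₜ[K] Coalgebra.comul (R := K) h) := by
  rw [smashComul_eq]; simp

@[simp] lemma smashActR_tmul (c : C) (h x : H) :
    smashActR K H C ((c ⊗ₜ[K] h) ⊗ₜ[K] x) = c ⊗ₜ[K] (h * x) := by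
  simp [smashActR]

@[simp] lemma smashRhoR_tmul (c : C) (h : H) :
    smashRhoR K H C (c ⊗ₜ[K] h) =
      (TensorProduct.assoc K C H H).symm (c ⊗ₜ[K] Coalgebra.comul (R := K) h) := by
  simp [smashRhoR]

set_option synthInstance.maxHeartbeats 200000 in
lemma smashPsi_mul (w : C ⊗[K] (H ⊗[K] C)) (y z : H ⊗[K] H) :
    smashPsi K H C (w ⊗ₜ[K] (y * z)) =
      TensorProduct.map (smashActR K H C) (smashActR K H C)
        ((tensorTensorTensorComm K (C ⊗[K] H) (C ⊗[K] H) H H)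
          ((smashPsi K H C (w ⊗ₜ[K] y)) ⊗ₜ[K] z)) := by
  induction w using TensorProduct.induction_on with
  | zero => simp
  | add u v hu hv => simp only [add_tmul, map_add, tmul_add, hu, hv]
  | tmul c m =>
    induction m using TensorProduct.induction_on with
    | zero => simp
    | add u v hu hv => simp only [add_tmul, tmul_add, map_add, hu, hv]
    | tmul x e =>
      induction y using TensorProduct.induction_on with
      | zero => simp
      | add u v hu hv => simp only [add_mul, tmul_add, map_add, add_tmul, hu, hv]
      | tmul p q =>
        induction z using TensorProduct.induction_on with
        | zero => simp
        | add u v hu hv => simp only [mul_add, tmul_add, map_add, hu, hv]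
        | tmul r s =>
          simp [Algebra.TensorProduct.tmul_mul_tmul, mul_assoc]

/-! ### Machinery for coassociativity of the smash coproduct -/

noncomputable def smashSigma : (H ⊗[K] C) ⊗[K] (H ⊗[K] H) →ₗ[K] H ⊗[K] (C ⊗[K] H) :=
  TensorProduct.map (LinearMap.mul' K H) LinearMap.id ∘ₗ
    (tensorTensorTensorComm K H C H H).toLinearMap

@[simp] lemma smashSigma_tmul (e : C) (z p q : H) :
    smashSigma K H C ((z ⊗ₜ[K] e) ⊗ₜ[K] (p ⊗ₜ[K] q)) = (z * p) ⊗ₜ[K] (e ⊗ₜ[K] q) := by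
  simp [smashSigma]

noncomputable def smashF2 :
    (H ⊗[K] (H ⊗[K] C)) ⊗[K] (H ⊗[K] (H ⊗[K] H)) →ₗ[K] H ⊗[K] (H ⊗[K] (C ⊗[K] H)) :=
  TensorProduct.map (LinearMap.mul' K H) (smashSigma K H C) ∘ₗ
    (tensorTensorTensorComm K H (H ⊗[K] C) H (H ⊗[K] H)).toLinearMap

@[simp] lemma smashF2_tmul (e : C) (y z h₁ h₂ h₃ : H) :
    smashF2 K H C ((y ⊗ₜ[K] (z ⊗ₜ[K] e)) ⊗ₜ[K] (h₁ ⊗ₜ[K] (h₂ ⊗ₜ[K] h₃))) =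
      (y * h₁) ⊗ₜ[K] ((z * h₂) ⊗ₜ[K] (e ⊗ₜ[K] h₃)) := by
  simp [smashF2]

noncomputable def smashG3 :
    (C ⊗[K] (H ⊗[K] C)) ⊗[K] (H ⊗[K] (H ⊗[K] (C ⊗[K] H))) →ₗ[K]
      ((C ⊗[K] H) ⊗[K] (C ⊗[K] H)) ⊗[K] (C ⊗[K] H) :=
  (TensorProduct.assoc K (C ⊗[K] H) (C ⊗[K] H) (C ⊗[K] H)).symm.toLinearMap ∘ₗ
    TensorProduct.map (smashActR K H C)
      (TensorProduct.assoc K C H (C ⊗[K] H)).symm.toLinearMap ∘ₗ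
    (tensorTensorTensorComm K (C ⊗[K] H) C H (H ⊗[K] (C ⊗[K] H))).toLinearMap ∘ₗ
    rTensor (H ⊗[K] (H ⊗[K] (C ⊗[K] H))) (TensorProduct.assoc K C H C).symm.toLinearMap

@[simp] lemma smashG3_tmul (c₁ c₂ : C) (x a b : H) (m : C ⊗[K] H) :
    smashG3 K H C ((c₁ ⊗ₜ[K] (x ⊗ₜ[K] c₂)) ⊗ₜ[K] (a ⊗ₜ[K] (b ⊗ₜ[K] m))) =
      ((c₁ ⊗ₜ[K] (x * a)) ⊗ₜ[K] (c₂ ⊗ₜ[K] b)) ⊗ₜ[K] m := by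
  simp [smashG3]

noncomputable def smashTheta :
    ((C ⊗[K] (H ⊗[K] C)) ⊗[K] (H ⊗[K] (H ⊗[K] C))) ⊗[K] ((H ⊗[K] H) ⊗[K] H) →ₗ[K]
      ((C ⊗[K] H) ⊗[K] (C ⊗[K] H)) ⊗[K] (C ⊗[K] H) :=
  smashG3 K H C ∘ₗ
    lTensor (C ⊗[K] (H ⊗[K] C)) (smashF2 K H C) ∘ₗ
    (TensorProduct.assoc K (C ⊗[K] (H ⊗[K] C)) (H ⊗[K] (H ⊗[K] C))
      (H ⊗[K] (H ⊗[K] H))).toLinearMap ∘ₗ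
    lTensor ((C ⊗[K] (H ⊗[K] C)) ⊗[K] (H ⊗[K] (H ⊗[K] C)))
      (TensorProduct.assoc K H H H).toLinearMap

@[simp] lemma smashTheta_tmul (c₁ c₂ c₃ : C) (x y z h₁ h₂ h₃ : H) :
    smashTheta K H C (((c₁ ⊗ₜ[K] (x ⊗ₜ[K] c₂)) ⊗ₜ[K] (y ⊗ₜ[K] (z ⊗ₜ[K] c₃))) ⊗ₜ[K]
        ((h₁ ⊗ₜ[K] h₂) ⊗ₜ[K] h₃)) =
      ((c₁ ⊗ₜ[K] (x * (y * h₁))) ⊗ₜ[K] (c₂ ⊗ₜ[K] (z * h₂))) ⊗ₜ[K] (c₃ ⊗ₜ[K] h₃) := by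
  simp [smashTheta]

noncomputable def smashTheta' :
    (C ⊗[K] (H ⊗[K] (C ⊗[K] (H ⊗[K] C)))) ⊗[K] (H ⊗[K] (H ⊗[K] H)) →ₗ[K]
      ((C ⊗[K] H) ⊗[K] (C ⊗[K] H)) ⊗[K] (C ⊗[K] H) :=
  (TensorProduct.assoc K (C ⊗[K] H) (C ⊗[K] H) (C ⊗[K] H)).symm.toLinearMap ∘ₗ
    TensorProduct.map (smashActR K H C) (smashPsi K H C) ∘ₗ
    (tensorTensorTensorComm K (C ⊗[K] H) (C ⊗[K] (H ⊗[K] C)) H (H ⊗[K] H)).toLinearMap ∘ₗ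
    rTensor (H ⊗[K] (H ⊗[K] H))
      (TensorProduct.assoc K C H (C ⊗[K] (H ⊗[K] C))).symm.toLinearMap

@[simp] lemma smashTheta'_tmul (c' e₁ e₂ : C) (x f h₁ g₁ g₂ : H) :
    smashTheta' K H C ((c' ⊗ₜ[K] (x ⊗ₜ[K] (e₁ ⊗ₜ[K] (f ⊗ₜ[K] e₂)))) ⊗ₜ[K]
        (h₁ ⊗ₜ[K] (g₁ ⊗ₜ[K] g₂))) =
      ((c' ⊗ₜ[K] (x * h₁)) ⊗ₜ[K] (e₁ ⊗ₜ[K] (f * g₁))) ⊗ₜ[K] (e₂ ⊗ₜ[K] g₂) := by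
  simp [smashTheta']

lemma smashTheta_eval₁ (A : C ⊗[K] (H ⊗[K] C)) (z g : H ⊗[K] H) (e : C) (q : H) :
    smashPsi K H C (A ⊗ₜ[K] (z * g)) ⊗ₜ[K] (e ⊗ₜ[K] q) =
      smashTheta K H C ((A ⊗ₜ[K] ((TensorProduct.assoc K H H C) (z ⊗ₜ[K] e))) ⊗ₜ[K]
        (g ⊗ₜ[K] q)) := by
  induction A using TensorProduct.induction_on with
  | zero => simp
  | add u v hu hv => simp only [add_tmul, map_add, hu, hv]
  | tmul a m =>
    induction m using TensorProduct.induction_on with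
    | zero => simp
    | add u v hu hv => simp only [add_tmul, tmul_add, map_add, hu, hv]
    | tmul r s =>
      induction z using TensorProduct.induction_on with
      | zero => simp
      | add u v hu hv => simp only [add_mul, add_tmul, tmul_add, map_add, hu, hv]
      | tmul z₁ z₂ =>
        induction g using TensorProduct.induction_on with
        | zero => simp
        | add u v hu hv => simp only [mul_add, add_tmul, tmul_add, map_add, hu, hv]
        | tmul g₁ g₂ =>
          simp [Algebra.TensorProduct.tmul_mul_tmul, mul_assoc]

lemma smashTheta'_eval (ρ : C →ₗ[K] H ⊗[K] C) (c' : C) (x h₁ : H) (w' : C ⊗[K] C)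
    (g : H ⊗[K] H) :
    (TensorProduct.assoc K (C ⊗[K] H) (C ⊗[K] H) (C ⊗[K] H)).symm
        ((c' ⊗ₜ[K] (x * h₁)) ⊗ₜ[K] smashPsi K H C ((lTensor C ρ w') ⊗ₜ[K] g)) =
      smashTheta' K H C ((c' ⊗ₜ[K] (x ⊗ₜ[K] (lTensor C ρ w'))) ⊗ₜ[K]
        (h₁ ⊗ₜ[K] g)) := by
  induction w' using TensorProduct.induction_on with
  | zero => simp
  | add u v hu hv => simp only [add_tmul, tmul_add, map_add, hu, hv]
  | tmul e₁ e₂ =>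
    simp only [lTensor_tmul]
    generalize ρ e₂ = vv
    induction vv using TensorProduct.induction_on with
    | zero => simp
    | add u v hu hv => simp only [add_tmul, tmul_add, map_add, hu, hv]
    | tmul f e₂' =>
      induction g using TensorProduct.induction_on with
      | zero => simp
      | add u v hu hv => simp only [add_tmul, tmul_add, map_add, hu, hv]
      | tmul g₁ g₂ => simp
set_option maxHeartbeats 1000000 in
set_option synthInstance.maxHeartbeats 400000 in
theorem smashCoproduct_rightHopfModuleCoalgebra
    (act : H ⊗[K] C →ₗ[K] C) (ρ : C →ₗ[K] H ⊗[K] C) (D : C →ₗ[K] C ⊗[K] C)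
    (hC : IsYetterDrinfeldCoalgebra K H act ρ D) :
    IsRightHopfModuleCoalgebra K H (smashActR K H C) (smashRhoR K H C)
      (smashComul K H C ρ D) := by
  obtain ⟨⟨-, -, hρcoassoc, -, -⟩, hDco, hmodco, hcomodco⟩ := hC
  have hH : ∀ h : H, rTensor H (Coalgebra.comul (R := K)) (Coalgebra.comul h) =
      (TensorProduct.assoc K H H H).symm
        (lTensor H (Coalgebra.comul (R := K)) (Coalgebra.comul h)) := fun h =>
    (LinearMap.congr_fun (Coalgebra.coassoc_symm (R := K) (A := H)) h).symm
  refine ⟨⟨?_, ?_, ?_, ?_, ?_⟩, ?_, ?_, ?_⟩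
  · -- right module: associativity
    intro m h h'
    induction m using TensorProduct.induction_on with
    | zero => simp
    | add u v hu hv => simp only [add_tmul, map_add, hu, hv]
    | tmul c k => simp [mul_assoc]
  · -- right module: unit
    intro m
    induction m using TensorProduct.induction_on with
    | zero => simp
    | add u v hu hv => simp only [add_tmul, map_add, hu, hv]
    | tmul c k => simp
  · -- comodule coassociativity for smashRhoR
    have A : ∀ (cc : C) (y : H ⊗[K] H),
        rTensor H (smashRhoR K H C) ((TensorProduct.assoc K C H H).symm (cc ⊗ₜ[K] y)) =
        rTensor H (TensorProduct.assoc K C H H).symm.toLinearMap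
          ((TensorProduct.assoc K C (H ⊗[K] H) H).symm
            (cc ⊗ₜ[K] rTensor H (Coalgebra.comul (R := K)) y)) := by
      intro cc y
      induction y using TensorProduct.induction_on with
      | zero => simp
      | add u v hu hv => simp only [tmul_add, map_add, hu, hv]
      | tmul p q =>
        simp only [assoc_symm_tmul, rTensor_tmul, smashRhoR_tmul]
        generalize Coalgebra.comul (R := K) p = z
        induction z using TensorProduct.induction_on with
        | zero => simp
        | add u v hu hv => simp only [tmul_add, add_tmul, map_add, hu, hv]
        | tmul r s => simp
    have B : ∀ (cc : C) (y : H ⊗[K] H),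
        (TensorProduct.assoc K (C ⊗[K] H) H H).symm
          (lTensor (C ⊗[K] H) (Coalgebra.comul (R := K))
            ((TensorProduct.assoc K C H H).symm (cc ⊗ₜ[K] y))) =
        rTensor H (TensorProduct.assoc K C H H).symm.toLinearMap
          ((TensorProduct.assoc K C (H ⊗[K] H) H).symm
            (cc ⊗ₜ[K]
              ((TensorProduct.assoc K H H H).symm
                (lTensor H (Coalgebra.comul (R := K)) y)))) := by
      intro cc y
      induction y using TensorProduct.induction_on with
      | zero => simp
      | add u v hu hv => simp only [tmul_add, map_add, hu, hv]
      | tmul p q =>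
        simp only [assoc_symm_tmul, lTensor_tmul]
        generalize Coalgebra.comul (R := K) q = z
        induction z using TensorProduct.induction_on with
        | zero => simp
        | add u v hu hv => simp only [tmul_add, add_tmul, map_add, hu, hv]
        | tmul r s => simp
    apply TensorProduct.ext'
    intro c h
    simp only [LinearMap.comp_apply, LinearEquiv.coe_coe, smashRhoR_tmul]
    rw [A, hH, B]
  · -- counit
    intro m
    induction m using TensorProduct.induction_on with
    | zero => simp
    | add u v hu hv => simp only [map_add, hu, hv]
    | tmul c h =>
      simp only [smashRhoR_tmul]
      have key : ∀ (y : H ⊗[K] H),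
          (TensorProduct.rid K (C ⊗[K] H))
            (lTensor (C ⊗[K] H) (Coalgebra.counit (R := K))
              ((TensorProduct.assoc K C H H).symm (c ⊗ₜ[K] y))) =
          c ⊗ₜ[K]
            (TensorProduct.rid K H) (lTensor H (Coalgebra.counit (R := K)) y) := by
        intro y
        induction y using TensorProduct.induction_on with
        | zero => simp
        | add u v hu hv => simp only [tmul_add, map_add, hu, hv]
        | tmul p q => simp [TensorProduct.smul_tmul']
      rw [key, Coalgebra.lTensor_counit_comul]
      simp
  · -- Hopf module compatibility
    apply TensorProduct.ext'
    intro m b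
    induction m using TensorProduct.induction_on with
    | zero => simp
    | add u v hu hv => simp only [add_tmul, map_add, hu, hv]
    | tmul c a =>
      have key : ∀ (y z : H ⊗[K] H),
          (TensorProduct.assoc K C H H).symm (c ⊗ₜ[K] (y * z)) =
          TensorProduct.map (smashActR K H C) (LinearMap.mul' K H)
            ((tensorTensorTensorComm K (C ⊗[K] H) H H H)
              (((TensorProduct.assoc K C H H).symm (c ⊗ₜ[K] y)) ⊗ₜ[K] z)) := by
        intro y z
        induction y using TensorProduct.induction_on with
        | zero => simp
        | add u v hu hv => simp only [add_mul, tmul_add, add_tmul, map_add, hu, hv]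
        | tmul p q =>
          induction z using TensorProduct.induction_on with
          | zero => simp
          | add u v hu hv => simp only [mul_add, tmul_add, map_add, hu, hv]
          | tmul r s => simp [Algebra.TensorProduct.tmul_mul_tmul]
      simp only [LinearMap.comp_apply, LinearEquiv.coe_coe, map_tmul,
        smashActR_tmul, smashRhoR_tmul, Bialgebra.comul_mul]
      exact key _ _
  · -- coassociativity of smashComul (BIG)
    apply TensorProduct.ext'
    intro c h
    have hDc : rTensor C D (D c) =
        (TensorProduct.assoc K C C C).symm (lTensor C D (D c)) := by
      simpa using LinearMap.congr_fun hDco c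
    have L1 : ∀ (w : C ⊗[K] C) (y : H ⊗[K] H),
        rTensor (C ⊗[K] H) (smashComul K H C ρ D)
            (smashPsi K H C ((lTensor C ρ w) ⊗ₜ[K] y)) =
          smashTheta K H C
            ((TensorProduct.map (lTensor C ρ)
                ((TensorProduct.assoc K H H C).toLinearMap ∘ₗ
                  rTensor C (Coalgebra.comul (R := K)) ∘ₗ ρ) (rTensor C D w)) ⊗ₜ[K]
              (rTensor H (Coalgebra.comul (R := K)) y)) := by
      intro w y
      induction w using TensorProduct.induction_on with
      | zero => simp
      | add u v hu hv => simp only [add_tmul, map_add, hu, hv]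
      | tmul c' c'' =>
        simp only [rTensor_tmul, lTensor_tmul, map_tmul, LinearMap.comp_apply,
          LinearEquiv.coe_coe]
        generalize ρ c'' = v
        induction v using TensorProduct.induction_on with
        | zero => simp
        | add u v hu hv => simp only [add_tmul, tmul_add, map_add, hu, hv]
        | tmul x e =>
          induction y using TensorProduct.induction_on with
          | zero => simp
          | add u v hu hv => simp only [tmul_add, map_add, hu, hv]
          | tmul p q =>
            simp only [smashPsi_tmul, rTensor_tmul, smashComul_apply,
              Bialgebra.comul_mul]
            rw [smashTheta_eval₁]
    have R1 : ∀ (w : C ⊗[K] C) (y : H ⊗[K] H),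
        (TensorProduct.assoc K (C ⊗[K] H) (C ⊗[K] H) (C ⊗[K] H)).symm
            (lTensor (C ⊗[K] H) (smashComul K H C ρ D)
              (smashPsi K H C ((lTensor C ρ w) ⊗ₜ[K] y))) =
          smashTheta' K H C
            ((lTensor C (lTensor H (lTensor C ρ))
                (lTensor C (lTensor H D ∘ₗ ρ) w)) ⊗ₜ[K]
              (lTensor H (Coalgebra.comul (R := K)) y)) := by
      intro w y
      induction w using TensorProduct.induction_on with
      | zero => simp
      | add u v hu hv => simp only [add_tmul, map_add, hu, hv]
      | tmul c' c'' =>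
        simp only [lTensor_tmul, LinearMap.comp_apply]
        generalize ρ c'' = v
        induction v using TensorProduct.induction_on with
        | zero => simp
        | add u v hu hv => simp only [add_tmul, tmul_add, map_add, hu, hv]
        | tmul x e =>
          induction y using TensorProduct.induction_on with
          | zero => simp
          | add u v hu hv => simp only [tmul_add, map_add, hu, hv]
          | tmul h₁ h₂ =>
            simp only [smashPsi_tmul, lTensor_tmul, smashComul_apply]
            rw [smashTheta'_eval]
    have R3 : ∀ (w : C ⊗[K] C) (y : H ⊗[K] H),
        smashTheta' K H C
            ((lTensor C (lTensor H (lTensor C ρ))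
                (lTensor C
                  (TensorProduct.map (LinearMap.mul' K H)
                      (LinearMap.id : C ⊗[K] C →ₗ[K] C ⊗[K] C) ∘ₗ
                    (tensorTensorTensorComm K H C H C).toLinearMap ∘ₗ
                    TensorProduct.map ρ ρ ∘ₗ D) w)) ⊗ₜ[K]
              (lTensor H (Coalgebra.comul (R := K)) y)) =
          smashTheta K H C
            ((TensorProduct.map (lTensor C ρ) (lTensor H ρ ∘ₗ ρ)
                ((TensorProduct.assoc K C C C).symm (lTensor C D w))) ⊗ₜ[K]
              ((TensorProduct.assoc K H H H).symm
                (lTensor H (Coalgebra.comul (R := K)) y))) := by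
      intro w y
      induction w using TensorProduct.induction_on with
      | zero => simp
      | add u v hu hv => simp only [add_tmul, map_add, hu, hv]
      | tmul c₁ cc =>
        simp only [lTensor_tmul, LinearMap.comp_apply]
        generalize D cc = w₂
        induction w₂ using TensorProduct.induction_on with
        | zero => simp
        | add u v hu hv => simp only [add_tmul, tmul_add, map_add, hu, hv]
        | tmul c₂ c₃ =>
          simp only [map_tmul, lTensor_tmul, LinearMap.comp_apply,
            LinearEquiv.coe_coe, assoc_symm_tmul, tensorTensorTensorComm_tmul]
          generalize ρ c₂ = v₂
          generalize ρ c₃ = v₃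
          induction v₂ using TensorProduct.induction_on with
          | zero => simp
          | add u v hu hv => simp only [add_tmul, tmul_add, map_add, hu, hv]
          | tmul p q =>
            induction v₃ using TensorProduct.induction_on with
            | zero => simp
            | add u v hu hv => simp only [add_tmul, tmul_add, map_add, hu, hv]
            | tmul r s =>
              simp only [tensorTensorTensorComm_tmul, map_tmul, lTensor_tmul,
                LinearMap.comp_apply, LinearMap.mul'_apply, LinearMap.id_coe, id_eq]
              generalize ρ s = vs
              induction vs using TensorProduct.induction_on with
              | zero => simp
              | add u v hu hv => simp only [add_tmul, tmul_add, map_add, hu, hv]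
              | tmul s₁ s₀ =>
                induction y using TensorProduct.induction_on with
                | zero => simp
                | add u v hu hv => simp only [tmul_add, map_add, hu, hv]
                | tmul h₁ h₂ =>
                  simp only [lTensor_tmul]
                  generalize Coalgebra.comul (R := K) h₂ = z
                  induction z using TensorProduct.induction_on with
                  | zero => simp
                  | add u v hu hv => simp only [add_tmul, tmul_add, map_add, hu, hv]
                  | tmul z₁ z₂ => simp [mul_assoc]
    simp only [LinearMap.comp_apply, LinearEquiv.coe_coe]
    rw [smashComul_apply, L1, R1, hcomodco, R3, ← hρcoassoc, hDc, hH]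
  · -- mixed relation
    apply TensorProduct.ext'
    intro c h
    have L : ∀ (cc : C) (y : H ⊗[K] H),
        rTensor H (smashComul K H C ρ D) ((TensorProduct.assoc K C H H).symm (cc ⊗ₜ[K] y)) =
        rTensor H (smashPsi K H C)
          ((TensorProduct.assoc K (C ⊗[K] (H ⊗[K] C)) (H ⊗[K] H) H).symm
            ((lTensor C ρ (D cc)) ⊗ₜ[K] rTensor H (Coalgebra.comul (R := K)) y)) := by
      intro cc y
      induction y using TensorProduct.induction_on with
      | zero => simp
      | add u v hu hv => simp only [tmul_add, map_add, hu, hv]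
      | tmul p q =>
        simp only [assoc_symm_tmul, rTensor_tmul, smashComul_apply]
    have R : ∀ (A : C ⊗[K] (H ⊗[K] C)) (y : H ⊗[K] H),
        (TensorProduct.assoc K (C ⊗[K] H) (C ⊗[K] H) H).symm
          (lTensor (C ⊗[K] H) (smashRhoR K H C) (smashPsi K H C (A ⊗ₜ[K] y))) =
        rTensor H (smashPsi K H C)
          ((TensorProduct.assoc K (C ⊗[K] (H ⊗[K] C)) (H ⊗[K] H) H).symm
            (A ⊗ₜ[K]
              ((TensorProduct.assoc K H H H).symm
                (lTensor H (Coalgebra.comul (R := K)) y)))) := by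
      intro A y
      induction A using TensorProduct.induction_on with
      | zero => simp
      | add u v hu hv => simp only [add_tmul, map_add, hu, hv]
      | tmul a m =>
        induction m using TensorProduct.induction_on with
        | zero => simp
        | add u v hu hv => simp only [add_tmul, tmul_add, map_add, hu, hv]
        | tmul x e =>
          induction y using TensorProduct.induction_on with
          | zero => simp
          | add u v hu hv => simp only [tmul_add, map_add, hu, hv]
          | tmul p q =>
            simp only [smashPsi_tmul, lTensor_tmul, smashRhoR_tmul, assoc_symm_tmul]
            generalize Coalgebra.comul (R := K) q = z
            induction z using TensorProduct.induction_on with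
            | zero => simp
            | add u v hu hv => simp only [tmul_add, add_tmul, map_add, hu, hv]
            | tmul r s => simp
    simp only [LinearMap.comp_apply, LinearEquiv.coe_coe, smashRhoR_tmul,
      smashComul_apply]
    rw [L, hH, ← R]
  · -- comultiplication is a module map
    apply TensorProduct.ext'
    intro m b
    induction m using TensorProduct.induction_on with
    | zero => simp
    | add u v hu hv => simp only [add_tmul, map_add, hu, hv]
    | tmul c a =>
      simp only [LinearMap.comp_apply, LinearEquiv.coe_coe, map_tmul,
        smashActR_tmul, smashComul_apply, Bialgebra.comul_mul]
      exact smashPsi_mul K H C _ _ _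
end

section
/- Let H be the 3-dimensional K-vector space with basis {x, y, z}, multiplication x² = x, y² = y, z² = 0, xy = yx = y, yz = z, xz = zx = z, zy = 0, and comultiplication Δ(x) = x⊗x, Δ(y) = y⊗y, Δ(z) = z⊗z. Then H is a bialgebra (without requiring unit or counit): the multiplication is associative, the comultiplication is coassociative, and Δ is an algebra map. -/
open TensorProduct LinearMap

section ThreeDim

variable (K : Type*) [Field K]

/-- Basis vectors `x = e 0`, `y = e 1`, `z = e 2` of the 3-dimensional space. -/
noncomputable def e (i : Fin 3) : Fin 3 → K := Pi.single i 1

/-- The multiplication determined by `x²=x, y²=y, z²=0, xy=yx=y, yz=z, xz=zx=z, zy=0`,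
written in coordinates with respect to the basis `{x, y, z}`. -/
def mulFun (u v : Fin 3 → K) : Fin 3 → K :=
  ![u 0 * v 0, u 0 * v 1 + u 1 * v 0 + u 1 * v 1, u 0 * v 2 + u 2 * v 0 + u 1 * v 2]

/-- The multiplication as a bilinear map. -/
noncomputable def mulB : (Fin 3 → K) →ₗ[K] (Fin 3 → K) →ₗ[K] (Fin 3 → K) :=
  LinearMap.mk₂ K (mulFun K)
    (fun u u' v => by funext i; fin_cases i <;> simp [mulFun] <;> ring)
    (fun a u v => by funext i; fin_cases i <;> simp [mulFun] <;> ring)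
    (fun u v v' => by funext i; fin_cases i <;> simp [mulFun] <;> ring)
    (fun a u v => by funext i; fin_cases i <;> simp [mulFun] <;> ring)

/-- The multiplication as a linear map on the tensor square. -/
noncomputable def mulL : (Fin 3 → K) ⊗[K] (Fin 3 → K) →ₗ[K] (Fin 3 → K) :=
  TensorProduct.lift (mulB K)

/-- The comultiplication `Δ(x) = x⊗x`, `Δ(y) = y⊗y`, `Δ(z) = z⊗z`. -/
noncomputable def comulD : (Fin 3 → K) →ₗ[K] (Fin 3 → K) ⊗[K] (Fin 3 → K) :=
  (LinearMap.proj 0).smulRight (e K 0 ⊗ₜ[K] e K 0) +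
  (LinearMap.proj 1).smulRight (e K 1 ⊗ₜ[K] e K 1) +
  (LinearMap.proj 2).smulRight (e K 2 ⊗ₜ[K] e K 2)

end ThreeDim

/-- The 3-dimensional example is a (non-unital, non-counital) bialgebra. -/
theorem threeDim_bialgebra (K : Type*) [Field K] :
    -- associativity
    (∀ u v w : Fin 3 → K, mulB K (mulB K u v) w = mulB K u (mulB K v w)) ∧
    -- coassociativity
    (rTensor (Fin 3 → K) (comulD K) ∘ₗ comulD K =
      (TensorProduct.assoc K (Fin 3 → K) (Fin 3 → K) (Fin 3 → K)).symm.toLinearMap ∘ₗ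
        lTensor (Fin 3 → K) (comulD K) ∘ₗ comulD K) ∧
    -- Δ is multiplicative: Δ(uv) = Δ(u)Δ(v)
    (comulD K ∘ₗ mulL K =
      TensorProduct.map (mulL K) (mulL K) ∘ₗ
        (tensorTensorTensorComm K (Fin 3 → K) (Fin 3 → K) (Fin 3 → K) (Fin 3 → K)).toLinearMap ∘ₗ
          TensorProduct.map (comulD K) (comulD K)) := by
  refine ⟨?_, ?_, ?_⟩
  · intro u v w
    funext i; fin_cases i <;> simp [mulB, mulFun] <;> ring
  · apply (Pi.basisFun K (Fin 3)).ext
    intro i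
    fin_cases i <;>
      simp [comulD, e, Pi.basisFun_apply, Pi.single_apply, TensorProduct.tmul_add,
        TensorProduct.add_tmul]
  · apply TensorProduct.ext
    apply (Pi.basisFun K (Fin 3)).ext
    intro i
    apply (Pi.basisFun K (Fin 3)).ext
    intro j
    fin_cases i <;> fin_cases j <;>
      simp [comulD, mulL, mulB, mulFun, e, Pi.basisFun_apply, Pi.single_apply,
        TensorProduct.tmul_add, TensorProduct.add_tmul] <;>
      first
      | rw [show (![0,0,0] : Fin 3 → K) = 0 from by funext k; fin_cases k <;> simp,
          TensorProduct.zero_tmul]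
      | (congr 1 <;> funext k <;> fin_cases k <;> simp [Pi.single_apply])
end

section
/- Let H be the 3-dimensional bialgebra over K with basis {x, y, z}, multiplication x²=x, y²=y, z²=0, xy=yx=y, yz=z, xz=zx=z, zy=0, comultiplication Δ(u)=u⊗u for u ∈ {x,y,z}. For a, b, d ∈ K define P₁(x)=az, P₁(y)=bz, P₁(z)=0 and Q(x)=dz, Q(y)=dz, Q(z)=0. Then (H, P₁, Q) is a Rota-Baxter bialgebra of weight (0, d): P₁(u)P₁(v) = P₁(uP₁(v)) + P₁(P₁(u)v) and Q(u₁)⊗Q(u₂) = Q(u)₁⊗Q(Q(u)₂) + Q(Q(u)₁)⊗Q(u)₂ + d Q(u)₁⊗Q(u)₂ for all u, v ∈ H. -/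
open TensorProduct LinearMap

/-- `P₁(x) = a z`, `P₁(y) = b z`, `P₁(z) = 0`. -/
noncomputable def P1 (K : Type*) [Field K] (a b : K) : (Fin 3 → K) →ₗ[K] (Fin 3 → K) :=
  (LinearMap.proj 0).smulRight (a • e K 2) + (LinearMap.proj 1).smulRight (b • e K 2)

/-- `Q(x) = d z`, `Q(y) = d z`, `Q(z) = 0`. -/
noncomputable def Q3 (K : Type*) [Field K] (d : K) : (Fin 3 → K) →ₗ[K] (Fin 3 → K) :=
  (LinearMap.proj 0).smulRight (d • e K 2) + (LinearMap.proj 1).smulRight (d • e K 2)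

/-- `(H, P₁, Q)` is a Rota--Baxter bialgebra of weight `(0, d)`. -/
theorem threeDim_rotaBaxterBialgebra_P1 (K : Type*) [Field K] (a b d : K) :
    -- Rota--Baxter algebra identity of weight 0
    (∀ u v : Fin 3 → K, mulB K (P1 K a b u) (P1 K a b v) =
      P1 K a b (mulB K u (P1 K a b v)) + P1 K a b (mulB K (P1 K a b u) v)) ∧
    -- Rota--Baxter coalgebra identity of weight d
    (TensorProduct.map (Q3 K d) (Q3 K d) ∘ₗ comulD K =
      lTensor (Fin 3 → K) (Q3 K d) ∘ₗ comulD K ∘ₗ Q3 K d +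
      rTensor (Fin 3 → K) (Q3 K d) ∘ₗ comulD K ∘ₗ Q3 K d +
      d • (comulD K ∘ₗ Q3 K d)) := by
  constructor
  · intro u v
    funext i
    fin_cases i <;>
      simp [mulB, P1, e, mulFun, Pi.single_apply]
  · apply LinearMap.ext
    intro u
    simp only [LinearMap.comp_apply, LinearMap.add_apply, LinearMap.smul_apply]
    simp [comulD, Q3, e, Pi.single_apply, TensorProduct.smul_tmul', TensorProduct.tmul_smul,
      TensorProduct.map_tmul, lTensor_tmul, rTensor_tmul, smul_smul]
    rw [← TensorProduct.add_tmul, ← add_smul]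
    ring_nf
end
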